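/- arXiv:2304.11927 — 6 statements merged into one kernel-verified Lean document; each statement's English description precedes it below -/
import Mathlib

section
/- Let φ be an ABMV rule satisfying the Chernoff property. Let (C, V) be an election, let k ≤ |C|, and let J ⊆ C be nonempty such that some winning k-committee w ∈ φ(C, V, k) satisfies w ∩ J ≠ ∅. Then for every set C' ⊆ C ∖ J with |C ∖ C'| ≥ k, there exists a winning k-committee w' ∈ φ(C ∖ C', V_{C∖C'}, k) with w ∩ J ⊆ w'; in particular w' ∩ J ≠ ∅. (Thus every rule satisfying the Chernoff property is immune to destructive control by deleting candidates.) -/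
open Finset

attribute [local instance] Classical.propDecidable

universe u

variable {α : Type u}

/-- The Thiele ω-score of a committee `w` in the election with votes `V`. -/
noncomputable def thieleScore [DecidableEq α] (ω : ℕ → ℝ) (V : Multiset (Finset α))
    (w : Finset α) : ℝ :=
  (V.map fun v => ω (v ∩ w).card).sum

/-- The ω margin contribution of candidate `c` to committee `w`. -/
noncomputable def marginContrib [DecidableEq α] (ω : ℕ → ℝ) (V : Multiset (Finset α))
    (w : Finset α) (c : α) : ℝ :=
  thieleScore ω V (insert c w) - thieleScore ω V w

/-- Candidates of `C \ w` whose ω margin contribution to `w` is maximum. -/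
noncomputable def maxMarginSet [DecidableEq α] (ω : ℕ → ℝ) (V : Multiset (Finset α))
    (C w : Finset α) : Finset α :=
  (C \ w).filter fun c => ∀ c' ∈ C \ w, marginContrib ω V w c' ≤ marginContrib ω V w c

/-- Among the maximizers, the candidate(s) earliest in the tie-breaking order `pri`
(the order with `a ⊳ b` iff `pri a < pri b`). -/
noncomputable def seqNext [DecidableEq α] (ω : ℕ → ℝ) (pri : α → ℕ) (V : Multiset (Finset α))
    (C w : Finset α) : Finset α :=
  (maxMarginSet ω V C w).filter fun c => ∀ c' ∈ maxMarginSet ω V C w, pri c ≤ pri c'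

/-- The winning `k`-committee of the sequential ω-Thiele rule with tie-breaking order `pri`:
starting from `∅`, repeatedly add the candidate with maximum ω margin contribution,
breaking ties in favor of the candidate earliest in the order. -/
noncomputable def seqCommittee [DecidableEq α] (ω : ℕ → ℝ) (pri : α → ℕ)
    (V : Multiset (Finset α)) (C : Finset α) : ℕ → Finset α
  | 0 => ∅
  | k + 1 => seqCommittee ω pri V C k ∪ seqNext ω pri V C (seqCommittee ω pri V C k)

/-- The AV score of a committee. -/
noncomputable def avScore [DecidableEq α] (V : Multiset (Finset α)) (w : Finset α) : ℕ :=
  (V.map fun v => (v ∩ w).card).sum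

/-- AV winning `k`-committees: the `k`-subsets of `C` of maximum AV score. -/
noncomputable def avWinners [DecidableEq α] (C : Finset α) (V : Multiset (Finset α)) (k : ℕ) :
    Finset (Finset α) :=
  (C.powersetCard k).filter fun w => ∀ w' ∈ C.powersetCard k, avScore V w' ≤ avScore V w

/-- The SAV score of a committee. -/
noncomputable def savScore [DecidableEq α] (V : Multiset (Finset α)) (w : Finset α) : ℝ :=
  (V.map fun v => ((w ∩ v).card : ℝ) / (v.card : ℝ)).sum

/-- SAV winning `k`-committees: the `k`-subsets of `C` of maximum SAV score. -/
noncomputable def savWinners [DecidableEq α] (C : Finset α) (V : Multiset (Finset α)) (k : ℕ) :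
    Finset (Finset α) :=
  (C.powersetCard k).filter fun w => ∀ w' ∈ C.powersetCard k, savScore V w' ≤ savScore V w

/-- The NSAV score of a committee (with respect to candidate set `C`). -/
noncomputable def nsavScore [DecidableEq α] (C : Finset α) (V : Multiset (Finset α))
    (w : Finset α) : ℝ :=
  (V.map fun v => ((w ∩ v).card : ℝ) / (v.card : ℝ)).sum
    - (V.map fun v => ((w \ v).card : ℝ) / ((C \ v).card : ℝ)).sum

/-- The PAV score of a committee. -/
noncomputable def pavScore [DecidableEq α] (V : Multiset (Finset α)) (w : Finset α) : ℝ :=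
  (V.map fun v => ∑ i ∈ Finset.range (v ∩ w).card, (1 : ℝ) / (i + 1)).sum

/-- PAV winning `k`-committees: the `k`-subsets of `C` of maximum PAV score. -/
noncomputable def pavWinners [DecidableEq α] (C : Finset α) (V : Multiset (Finset α)) (k : ℕ) :
    Finset (Finset α) :=
  (C.powersetCard k).filter fun w => ∀ w' ∈ C.powersetCard k, pavScore V w' ≤ pavScore V w

/-- The ABCCV score of a committee: the number of votes approving at least one member. -/
noncomputable def abccvScore [DecidableEq α] (V : Multiset (Finset α)) (w : Finset α) : ℕ :=
  Multiset.card (V.filter fun v => (v ∩ w).Nonempty)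

/-- ABCCV winning `k`-committees: the `k`-subsets of `C` of maximum ABCCV score. -/
noncomputable def abccvWinners [DecidableEq α] (C : Finset α) (V : Multiset (Finset α)) (k : ℕ) :
    Finset (Finset α) :=
  (C.powersetCard k).filter fun w => ∀ w' ∈ C.powersetCard k, abccvScore V w' ≤ abccvScore V w

/-- The MAV score of a committee: the maximum Hamming distance to a vote. -/
noncomputable def mavScore [DecidableEq α] (V : Multiset (Finset α)) (w : Finset α) : ℕ :=
  (V.map fun v => (w \ v).card + (v \ w).card).sup

/-- MAV winning `k`-committees: the `k`-subsets of `C` of minimum MAV score. -/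
noncomputable def mavWinners [DecidableEq α] (C : Finset α) (V : Multiset (Finset α)) (k : ℕ) :
    Finset (Finset α) :=
  (C.powersetCard k).filter fun w => ∀ w' ∈ C.powersetCard k, mavScore V w ≤ mavScore V w'

def ChernoffProperty [DecidableEq α]
    (φ : Finset α → Multiset (Finset α) → ℕ → Finset (Finset α)) : Prop :=
  ∀ (C : Finset α) (V : Multiset (Finset α)) (k : ℕ) (C' : Finset α),
    C' ⊆ C → k ≤ C'.card → ∀ w ∈ φ C V k, ∃ w' ∈ φ C' (V.map (· ∩ C')) k, w ∩ C' ⊆ w'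

theorem ChernoffProperty.exists_mem_restrict_superset [DecidableEq α]
    {φ : Finset α → Multiset (Finset α) → ℕ → Finset (Finset α)} (hφ : ChernoffProperty φ)
    {C C' S w : Finset α} {V : Multiset (Finset α)} {k : ℕ} (hC' : C' ⊆ C) (hk : k ≤ C'.card)
    (hw : w ∈ φ C V k) (hS : S ⊆ w ∩ C') :
    ∃ w' ∈ φ C' (V.map (· ∩ C')) k, S ⊆ w' := by
  obtain ⟨w', hw', hsub⟩ := hφ C V k C' hC' hk w hw
  exact ⟨w', hw', hS.trans hsub⟩

theorem chernoff_immune_dcdc_general {α : Type u} [DecidableEq α]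
    (φ : Finset α → Multiset (Finset α) → ℕ → Finset (Finset α))
    (hchernoff : ∀ (C : Finset α) (V : Multiset (Finset α)) (k : ℕ) (C' : Finset α),
      C' ⊆ C → k ≤ C'.card →
      ∀ w ∈ φ C V k, ∃ w' ∈ φ C' (V.map (· ∩ C')) k, w ∩ C' ⊆ w')
    (C : Finset α) (V : Multiset (Finset α)) (k : ℕ)
    (J : Finset α) (hJC : J ⊆ C)
    (w : Finset α) (hw : w ∈ φ C V k) (hwJ : (w ∩ J).Nonempty) :
    ∀ C' ⊆ C \ J, k ≤ (C \ C').card →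
      ∃ w' ∈ φ (C \ C') (V.map (· ∩ (C \ C'))) k, w ∩ J ⊆ w' ∧ (w' ∩ J).Nonempty := by
  intro C' hC' hcard
  have hJ_remaining : J ⊆ C \ C' := subset_sdiff.2 ⟨hJC, (subset_sdiff.1 hC').2.symm⟩
  obtain ⟨w', hw', hsub⟩ := ChernoffProperty.exists_mem_restrict_superset (φ := φ) hchernoff
    sdiff_subset hcard hw (inter_subset_inter_left hJ_remaining)
  exact ⟨w', hw', hsub, hwJ.mono (subset_inter hsub inter_subset_right)⟩

/-- Every ABMV rule satisfying the Chernoff property is immune to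
destructive control by deleting candidates. -/
theorem chernoff_immune_dcdc {α : Type u} [DecidableEq α]
    (φ : Finset α → Multiset (Finset α) → ℕ → Finset (Finset α))
    (hrule : ∀ (C : Finset α) (V : Multiset (Finset α)) (k : ℕ), k ≤ C.card →
      (φ C V k).Nonempty ∧ ∀ w ∈ φ C V k, w ⊆ C ∧ w.card = k)
    (hchernoff : ∀ (C : Finset α) (V : Multiset (Finset α)) (k : ℕ) (C' : Finset α),
      C' ⊆ C → k ≤ C'.card →
      ∀ w ∈ φ C V k, ∃ w' ∈ φ C' (V.map (· ∩ C')) k, w ∩ C' ⊆ w')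
    (C : Finset α) (V : Multiset (Finset α)) (k : ℕ) (hk : k ≤ C.card)
    (J : Finset α) (hJC : J ⊆ C) (hJ : J.Nonempty)
    (w : Finset α) (hw : w ∈ φ C V k) (hwJ : (w ∩ J).Nonempty) :
    ∀ C' ⊆ C \ J, k ≤ (C \ C').card →
      ∃ w' ∈ φ (C \ C') (V.map (· ∩ (C \ C'))) k, w ∩ J ⊆ w' ∧ (w' ∩ J).Nonempty :=
  chernoff_immune_dcdc_general φ hchernoff C V k J hJC w hw hwJ
end

section
/- The approval voting rule AV satisfies the Chernoff property: for every election (C, V), every k ≤ |C|, and every C' ⊆ C with |C'| ≥ k, for every AV winning k-committee w of (C, V) there exists an AV winning k-committee w' of (C', V_{C'}) with w ∩ C' ⊆ w'. -/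
open Finset

attribute [local instance] Classical.propDecidable

universe u

variable {α : Type u}

/-! The AV score is additive: it is the sum of the approval counts of the committee members.
Hence a `k`-subset of `C` is an AV winner iff no candidate outside it has more approvals than a
member. Given a winner `w`, take a `k`-subset `w'` of `C'` containing `w ∩ C'` with maximum
total approval count. A candidate `c ∈ C' \ w'` cannot beat a member `d ∈ w'`: if `d ∈ w`,
then `c ∉ w` and `w` is a winner; otherwise swapping `d` for `c` keeps `w ∩ C'` inside, so
maximality of `w'` applies. -/

section Exchange

variable {ι M : Type*} [AddCommMonoid M] [LinearOrder M]
  [IsOrderedCancelAddMonoid M] {f : ι → M}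

theorem Finset.sum_le_sum_of_card_eq_of_forall_le {s t : Finset ι} (hst : s.card = t.card)
    (h : ∀ c ∈ s, ∀ d ∈ t, f c ≤ f d) : ∑ c ∈ s, f c ≤ ∑ d ∈ t, f d := by
  rcases t.eq_empty_or_nonempty with rfl | ht
  · simp_all
  obtain ⟨d₀, hd₀, hmin⟩ := t.exists_min_image f ht
  calc ∑ c ∈ s, f c
      ≤ s.card • f d₀ := s.sum_le_card_nsmul f _ fun c hc => h c hc d₀ hd₀
    _ = t.card • f d₀ := by rw [hst]
    _ ≤ ∑ d ∈ t, f d := t.card_nsmul_le_sum f _ hmin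

theorem Finset.sum_le_sum_of_exchange [DecidableEq ι] {s u : Finset ι}
    (hcard : u.card = s.card)
    (h : ∀ c ∈ u \ s, ∀ d ∈ s \ u, f c ≤ f d) : ∑ c ∈ u, f c ≤ ∑ d ∈ s, f d := by
  rw [← sum_inter_add_sum_sdiff u s, ← sum_inter_add_sum_sdiff s u, inter_comm s u]
  exact add_le_add le_rfl (sum_le_sum_of_card_eq_of_forall_le (card_sdiff_comm hcard) h)

theorem Finset.le_of_sum_insert_erase_le [DecidableEq ι] {s : Finset ι} {c d : ι}
    (hc : c ∉ s) (hd : d ∈ s)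
    (h : ∑ x ∈ insert c (s.erase d), f x ≤ ∑ x ∈ s, f x) : f c ≤ f d := by
  rw [sum_insert fun hc' => hc (mem_of_mem_erase hc'), ← add_sum_erase s f hd] at h
  exact le_of_add_le_add_right h

theorem Finset.insert_erase_mem_powersetCard [DecidableEq ι] {C s : Finset ι} {k : ℕ} {c d : ι}
    (hs : s ∈ C.powersetCard k) (hcC : c ∈ C) (hcs : c ∉ s) (hds : d ∈ s) :
    insert c (s.erase d) ∈ C.powersetCard k := by
  rw [mem_powersetCard] at hs ⊢
  refine ⟨insert_subset hcC ((erase_subset d s).trans hs.1), ?_⟩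
  rw [card_insert_of_notMem fun h => hcs (mem_of_mem_erase h), card_erase_of_mem hds,
    ← hs.2, Nat.sub_add_cancel (card_pos.2 ⟨d, hds⟩)]

end Exchange

section Approval

variable {α : Type u} [DecidableEq α]

noncomputable def approvalCount (V : Multiset (Finset α)) (c : α) : ℕ :=
  V.countP (c ∈ ·)

theorem avScore_eq_sum_approvalCount (V : Multiset (Finset α)) (s : Finset α) :
    avScore V s = ∑ c ∈ s, approvalCount V c := by
  induction V using Multiset.induction_on with
  | empty => simp [avScore, approvalCount]
  | cons v V ih =>
    simp only [avScore, approvalCount, Multiset.map_cons, Multiset.sum_cons,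
      Multiset.countP_cons] at ih ⊢
    rw [ih, sum_add_distrib, inter_comm, ← filter_mem_eq_inter, card_filter, add_comm]

theorem approvalCount_map_inter (V : Multiset (Finset α)) {C' : Finset α} {c : α}
    (hc : c ∈ C') : approvalCount (V.map (· ∩ C')) c = approvalCount V c := by
  rw [approvalCount, approvalCount, Multiset.countP_map, Multiset.countP_eq_card_filter]
  simp only [mem_inter, hc, and_true]

theorem mem_avWinners_iff {C : Finset α} {V : Multiset (Finset α)} {k : ℕ} {s : Finset α} :
    s ∈ avWinners C V k ↔ s ∈ C.powersetCard k ∧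
      ∀ c ∈ C \ s, ∀ d ∈ s, approvalCount V c ≤ approvalCount V d := by
  simp only [avWinners, mem_filter, avScore_eq_sum_approvalCount]
  refine and_congr_right fun hs => ⟨fun hmax c hc d hd => ?_, fun hex u hu => ?_⟩
  · rw [mem_sdiff] at hc
    exact le_of_sum_insert_erase_le hc.2 hd
      (hmax _ (insert_erase_mem_powersetCard hs hc.1 hc.2 hd))
  · rw [mem_powersetCard] at hs hu
    refine sum_le_sum_of_exchange (hu.2.trans hs.2.symm) fun c hc d hd => ?_
    exact hex c (sdiff_subset_sdiff hu.1 subset_rfl hc) d (sdiff_subset hd)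

end Approval

theorem av_chernoff_general {α : Type u} [DecidableEq α]
    (C : Finset α) (V : Multiset (Finset α))
    (k : ℕ)
    (C' : Finset α) (hC'sub : C' ⊆ C) (hkC' : k ≤ C'.card) :
    ∀ w ∈ avWinners C V k, ∃ w' ∈ avWinners C' (V.map (· ∩ C')) k, w ∩ C' ⊆ w' := by
  intro w hw
  obtain ⟨hwk, hwex⟩ := mem_avWinners_iff.1 hw
  set S := (C'.powersetCard k).filter (w ∩ C' ⊆ ·)
  have hS : S.Nonempty := by
    have hcard : (w ∩ C').card ≤ k := (mem_powersetCard.1 hwk).2 ▸ card_le_card inter_subset_left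
    obtain ⟨u, hwu, huC', hu⟩ := exists_subsuperset_card_eq inter_subset_right hcard hkC'
    exact ⟨u, mem_filter.2 ⟨mem_powersetCard.2 ⟨huC', hu⟩, hwu⟩⟩
  obtain ⟨w', hw'S, hw'max⟩ := S.exists_max_image (∑ c ∈ ·, approvalCount V c) hS
  obtain ⟨hw'k, hww'⟩ := mem_filter.1 hw'S
  refine ⟨w', mem_avWinners_iff.2 ⟨hw'k, fun c hc d hd => ?_⟩, hww'⟩
  obtain ⟨hcC', hcw'⟩ := mem_sdiff.1 hc
  rw [approvalCount_map_inter V hcC',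
    approvalCount_map_inter V ((mem_powersetCard.1 hw'k).1 hd)]
  by_cases hdw : d ∈ w
  · have hcw : c ∉ w := fun hcw => hcw' (hww' (mem_inter.2 ⟨hcw, hcC'⟩))
    exact hwex c (mem_sdiff.2 ⟨hC'sub hcC', hcw⟩) d hdw
  · refine le_of_sum_insert_erase_le hcw' hd (hw'max _ (mem_filter.2 ⟨?_, ?_⟩))
    · exact insert_erase_mem_powersetCard hw'k hcC' hcw' hd
    · exact fun x hx => mem_insert_of_mem (mem_erase.2
        ⟨fun hxd => hdw (hxd ▸ (mem_inter.1 hx).1), hww' hx⟩)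

/-- The approval voting rule AV satisfies the Chernoff property. -/
theorem av_chernoff {α : Type u} [DecidableEq α]
    (C : Finset α) (V : Multiset (Finset α)) (hV : ∀ v ∈ V, v ⊆ C)
    (k : ℕ) (hk : k ≤ C.card)
    (C' : Finset α) (hC'sub : C' ⊆ C) (hkC' : k ≤ C'.card) :
    ∀ w ∈ avWinners C V k, ∃ w' ∈ avWinners C' (V.map (· ∩ C')) k, w ∩ C' ⊆ w' :=
  av_chernoff_general C V k C' hC'sub hkC'
end

section
/- Let ω be a Thiele function with ω(2) < 2ω(1), let k ≥ 1 and κ ≥ 1 be integers, and let G = (N, A) be a 3-regular graph with at least two edges. Construct the election with candidates: one candidate c(e) for each edge e ∈ A; pairwise disjoint sets C(i) = {c_i^1, c_i^2, c_i^3} of fresh candidates for each i ∈ {1, …, k−1}; and a fresh candidate p. Votes V: two copies of the vote {p}; for each vertex u ∈ N, one vote v(u) = {c(e) : e ∈ A incident to u}; and for each i ∈ {1, …, k−1}, the three votes {c_i^1, c_i^2}, {c_i^1, c_i^3}, {c_i^2, c_i^3}. Fix any tie-breaking linear order ⊳ placing all candidates of the sets C(i) first, then all edge candidates c(e), then p last.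 Then G has a vertex cover of size at most κ if and only if there exists a submultiset V' ⊆ V with |V'| ≤ κ such that p belongs to the seqω winning k-committee of (C, V ∖ V') with respect to ⊳. -/
/-!
Forward direction: deleting the votes of the vertices of a cover leaves every edge candidate with
at most one approval. While some gadget `C(i)` is untouched, the best margin `2ω(1)` is reached
only by `p` and by the candidates of untouched gadgets, and the tie-breaking order prefers the
latter; so the first `k - 1` rounds pick one candidate from each gadget. In round `k` the remaining
gadget candidates have margin `ω(2) < 2ω(1)`, edge candidates at most `ω(1)`, and `p` wins.

Backward direction: look at the round in which `p` is picked. No candidate ranked before `p` may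
then have two approving votes disjoint from the committee, since its margin would be `≥ 2ω(1)`.
Hence an edge with no deleted vertex vote shares a vertex with an edge already in the committee,
and every untouched gadget has lost at least two of its three votes. The deleted vertices together
with the endpoints of the committee edges form a cover of size `|D| + 2|M|`, and `|M|` is at most
the number of untouched gadgets because the committee has fewer than `k` members.
-/

open Finset

attribute [local instance] Classical.propDecidable

universe u

variable {α : Type u}

theorem Multiset.mem_sub_of_mem_of_notMem {β : Type*} [DecidableEq β] {a : β} {s t : Multiset β}
    (hs : a ∈ s) (ht : a ∉ t) : a ∈ s - t := by
  rw [Multiset.mem_sub, Multiset.count_eq_zero.2 ht, Multiset.count_pos]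
  exact hs

section SequentialThiele

variable [DecidableEq α] (ω : ℕ → ℝ) (V : Multiset (Finset α)) {w : Finset α} {c : α}

theorem marginContrib_eq_sum_filter (hc : c ∉ w) :
    marginContrib ω V w c =
      ((V.filter (c ∈ ·)).map fun v => ω ((v ∩ w).card + 1) - ω (v ∩ w).card).sum := by
  rw [marginContrib, thieleScore, thieleScore, ← Multiset.sum_map_sub]
  conv_lhs => rw [← Multiset.filter_add_not (c ∈ ·) V, Multiset.map_add, Multiset.sum_add]
  have hnot : ((V.filter (c ∉ ·)).map fun v => ω (v ∩ insert c w).card - ω (v ∩ w).card).sum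
      = 0 :=
    Multiset.sum_eq_zero fun x hx => by
      obtain ⟨v, hv, rfl⟩ := Multiset.mem_map.1 hx
      rw [Finset.inter_insert_of_notMem (Multiset.mem_filter.1 hv).2, sub_self]
  rw [hnot, add_zero]
  refine congrArg _ (Multiset.map_congr rfl fun v hv => ?_)
  rw [Finset.inter_insert_of_mem (Multiset.mem_filter.1 hv).2,
    Finset.card_insert_of_notMem fun h => hc (Finset.mem_inter.1 h).2]

theorem card_filter_disjoint_mul_le_marginContrib (hω0 : ω 0 = 0)
    (hmono : ∀ i, ω i ≤ ω (i + 1)) (hc : c ∉ w) :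
    ((V.filter fun v => c ∈ v ∧ Disjoint v w).card : ℝ) * ω 1 ≤ marginContrib ω V w c := by
  let f : Finset α → ℝ := fun v => ω ((v ∩ w).card + 1) - ω (v ∩ w).card
  let F := V.filter (c ∈ ·)
  have hF : V.filter (fun v => c ∈ v ∧ Disjoint v w) = F.filter (Disjoint · w) := by
    rw [Multiset.filter_filter]
    exact Multiset.filter_congr fun v _ => and_comm
  have hdisj : ∀ v ∈ F.filter (Disjoint · w), f v = ω 1 := fun v hv => by
    simp [f, Finset.disjoint_iff_inter_eq_empty.1 (Multiset.mem_filter.1 hv).2, hω0]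
  have hrest : 0 ≤ ((F.filter fun v => ¬Disjoint v w).map f).sum :=
    Multiset.sum_nonneg fun x hx => by
      obtain ⟨v, -, rfl⟩ := Multiset.mem_map.1 hx
      exact sub_nonneg.2 (hmono _)
  calc ((V.filter fun v => c ∈ v ∧ Disjoint v w).card : ℝ) * ω 1
      = ((F.filter (Disjoint · w)).map f).sum := by
        rw [hF, Multiset.map_congr rfl hdisj, Multiset.map_const', Multiset.sum_replicate,
          nsmul_eq_mul]
    _ ≤ ((F.filter (Disjoint · w)).map f).sum + ((F.filter fun v => ¬Disjoint v w).map f).sum :=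
        le_add_of_nonneg_right hrest
    _ = marginContrib ω V w c := by
        rw [← Multiset.sum_add, ← Multiset.map_add, Multiset.filter_add_not,
          marginContrib_eq_sum_filter ω V hc]

theorem two_mul_le_marginContrib (hω0 : ω 0 = 0) (hmono : ∀ i, ω i ≤ ω (i + 1)) (hc : c ∉ w)
    {v₁ v₂ : Finset α} (hne : v₁ ≠ v₂) (hv₁ : v₁ ∈ V) (hv₂ : v₂ ∈ V) (hcv₁ : c ∈ v₁)
    (hcv₂ : c ∈ v₂) (hdisj₁ : Disjoint v₁ w) (hdisj₂ : Disjoint v₂ w) :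
    2 * ω 1 ≤ marginContrib ω V w c := by
  have hpair : ({v₁, v₂} : Multiset (Finset α)) ≤ V.filter fun v => c ∈ v ∧ Disjoint v w :=
    (Multiset.le_iff_subset (by simpa using hne)).2 fun v hv => by
      rcases Multiset.mem_cons.1 hv with rfl | hv
      · exact Multiset.mem_filter.2 ⟨hv₁, hcv₁, hdisj₁⟩
      · rw [Multiset.mem_singleton.1 hv]; exact Multiset.mem_filter.2 ⟨hv₂, hcv₂, hdisj₂⟩
  have hcard : (2 : ℝ) ≤ (V.filter fun v => c ∈ v ∧ Disjoint v w).card := by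
    exact_mod_cast (Multiset.card_le_card hpair)
  have hω1 : 0 ≤ ω 1 := hω0 ▸ hmono 0
  nlinarith [card_filter_disjoint_mul_le_marginContrib ω V hω0 hmono hc]

theorem succ_sub_le_of_le_one (hω0 : ω 0 = 0) (hω : ω 2 < 2 * ω 1) {n : ℕ} (hn : n ≤ 1) :
    ω (n + 1) - ω n ≤ ω 1 := by
  interval_cases n
  · simp [hω0]
  · norm_num; linarith

theorem sum_map_le_card_mul (hω0 : ω 0 = 0) (hω : ω 2 < 2 * ω 1) {F : Multiset (Finset α)}
    (hinter : ∀ v ∈ F, (v ∩ w).card ≤ 1) :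
    (F.map fun v => ω ((v ∩ w).card + 1) - ω (v ∩ w).card).sum ≤ F.card * ω 1 := by
  rw [← nsmul_eq_mul, ← Multiset.card_map (fun v => ω ((v ∩ w).card + 1) - ω (v ∩ w).card)]
  refine Multiset.sum_le_card_nsmul _ _ fun x hx => ?_
  obtain ⟨v, hv, rfl⟩ := Multiset.mem_map.1 hx
  exact succ_sub_le_of_le_one ω hω0 hω (hinter v hv)

theorem marginContrib_lt_two_mul (hω0 : ω 0 = 0) (hmono : ∀ i, ω i ≤ ω (i + 1))
    (hω : ω 2 < 2 * ω 1) (hc : c ∉ w) (hcard : (V.filter (c ∈ ·)).card ≤ 2)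
    (hinter : ∀ v ∈ V, c ∈ v → (v ∩ w).card ≤ 1)
    (hfew : (V.filter (c ∈ ·)).card < 2 ∨ ∃ v ∈ V, c ∈ v ∧ (v ∩ w).Nonempty) :
    marginContrib ω V w c < 2 * ω 1 := by
  have hω1 : 0 < ω 1 := by linarith [hmono 1]
  have hinterF : ∀ v ∈ V.filter (c ∈ ·), (v ∩ w).card ≤ 1 := fun v hv =>
    hinter v (Multiset.mem_of_mem_filter hv) (Multiset.mem_filter.1 hv).2
  rw [marginContrib_eq_sum_filter ω V hc]
  rcases hfew with hfew | ⟨v, hv, hcv, hmeet⟩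
  · have hsum := sum_map_le_card_mul ω hω0 hω hinterF
    have : ((V.filter (c ∈ ·)).card : ℝ) ≤ 1 := by exact_mod_cast Nat.le_of_lt_succ hfew
    nlinarith
  · -- the vote `v` contributes only `ω(2) - ω(1) < ω(1)`
    have hvF : v ∈ V.filter (c ∈ ·) := Multiset.mem_filter.2 ⟨hv, hcv⟩
    have hone : (v ∩ w).card = 1 := le_antisymm (hinterF v hvF) (Finset.card_pos.2 hmeet)
    have hrest := sum_map_le_card_mul ω hω0 hω (F := (V.filter (c ∈ ·)).erase v) fun u hu =>
      hinterF u (Multiset.mem_of_mem_erase hu)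
    have hcard' : (((V.filter (c ∈ ·)).erase v).card : ℝ) ≤ 1 := by
      rw [Multiset.card_erase_of_mem hvF, Nat.pred_eq_sub_one]; exact_mod_cast (by omega)
    have hfirst : ω (1 + 1) - ω 1 < ω 1 := by norm_num; linarith
    rw [← Multiset.cons_erase hvF, Multiset.map_cons, Multiset.sum_cons, hone]
    nlinarith

variable {pri : α → ℕ} {C : Finset α}

theorem seqNext_subset_sdiff : seqNext ω pri V C w ⊆ C \ w :=
  (Finset.filter_subset _ _).trans (Finset.filter_subset _ _)

theorem seqNext_nonempty (h : (C \ w).Nonempty) : (seqNext ω pri V C w).Nonempty := by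
  obtain ⟨x, hx, hmax⟩ := Finset.exists_max_image (C \ w) (marginContrib ω V w) h
  obtain ⟨y, hy, hmin⟩ :=
    Finset.exists_min_image (maxMarginSet ω V C w) pri ⟨x, Finset.mem_filter.2 ⟨hx, hmax⟩⟩
  exact ⟨y, Finset.mem_filter.2 ⟨hy, hmin⟩⟩

theorem marginContrib_le_of_mem_seqNext {c' : α} (hc : c ∈ seqNext ω pri V C w)
    (hc' : c' ∈ C \ w) : marginContrib ω V w c' ≤ marginContrib ω V w c :=
  (Finset.mem_filter.1 (Finset.mem_filter.1 hc).1).2 c' hc'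

theorem marginContrib_lt_of_mem_seqNext {c' : α} (hc : c ∈ seqNext ω pri V C w)
    (hc' : c' ∈ C \ w) (hpri : pri c' < pri c) :
    marginContrib ω V w c' < marginContrib ω V w c := by
  refine (marginContrib_le_of_mem_seqNext ω V hc hc').lt_of_ne fun heq => ?_
  have hmax : c' ∈ maxMarginSet ω V C w := Finset.mem_filter.2 ⟨hc', fun c'' hc'' =>
    heq ▸ marginContrib_le_of_mem_seqNext ω V hc hc''⟩
  exact (Finset.mem_filter.1 hc).2 c' hmax |>.not_gt hpri

theorem seqNext_eq_singleton (hinj : Set.InjOn pri C) (hc : c ∈ seqNext ω pri V C w) :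
    seqNext ω pri V C w = {c} := by
  refine Finset.eq_singleton_iff_unique_mem.2 ⟨hc, fun c' hc' => ?_⟩
  have hC : ∀ {x}, x ∈ seqNext ω pri V C w → x ∈ C := fun hx =>
    (Finset.mem_sdiff.1 (seqNext_subset_sdiff ω V hx)).1
  have hmin : ∀ {x y}, x ∈ seqNext ω pri V C w → y ∈ seqNext ω pri V C w → pri x ≤ pri y :=
    fun hx hy => (Finset.mem_filter.1 hx).2 _ (Finset.mem_filter.1 hy).1
  exact hinj (hC hc') (hC hc) ((hmin hc' hc).antisymm (hmin hc hc'))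

theorem card_seqCommittee_le (hinj : Set.InjOn pri C) (r : ℕ) :
    (seqCommittee ω pri V C r).card ≤ r := by
  induction r with
  | zero => simp [seqCommittee]
  | succ r ih =>
    rw [seqCommittee]
    refine (Finset.card_union_le _ _).trans (add_le_add ih (Finset.card_le_one.2 ?_))
    intro a ha b hb
    rw [seqNext_eq_singleton ω V hinj ha] at hb
    exact (Finset.mem_singleton.1 hb).symm

theorem exists_mem_seqNext_of_mem_seqCommittee {n : ℕ} (hc : c ∈ seqCommittee ω pri V C n) :
    ∃ r < n, c ∉ seqCommittee ω pri V C r ∧ c ∈ seqNext ω pri V C (seqCommittee ω pri V C r) := by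
  induction n with
  | zero => simp [seqCommittee] at hc
  | succ n ih =>
    by_cases hcn : c ∈ seqCommittee ω pri V C n
    · obtain ⟨r, hr, hcr⟩ := ih hcn
      exact ⟨r, hr.trans n.lt_succ_self, hcr⟩
    · rw [seqCommittee, Finset.mem_union] at hc
      exact ⟨n, n.lt_succ_self, hcn, hc.resolve_left hcn⟩

end SequentialThiele

namespace Stmt5

variable {β : Type u} [DecidableEq β]

/-- Candidate type: an edge candidate `c(e)`, a fresh candidate `c_i^j` of a set `C(i)`,
or the distinguished candidate `p`. -/
abbrev Cand (β : Type u) := Finset β ⊕ (ℕ × Fin 3) ⊕ Unit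

/-- The distinguished candidate `p`. -/
def pc : Cand β := Sum.inr (Sum.inr ())

/-- The candidate `c_i^j`. -/
def cI (i : ℕ) (j : Fin 3) : Cand β := Sum.inr (Sum.inl (i, j))

/-- The set `C(i) = {c_i^1, c_i^2, c_i^3}`. -/
def CiSet (i : ℕ) : Finset (Cand β) := {cI i 0, cI i 1, cI i 2}

/-- The whole candidate set. -/
def Ctot (k : ℕ) (Aed : Finset (Finset β)) : Finset (Cand β) :=
  insert pc (Aed.image Sum.inl ∪ (Finset.range (k - 1)).biUnion CiSet)

/-- The votes: two copies of `{p}`; for each vertex `u ∈ N`, the vote consisting of the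
candidates of edges incident to `u`; and for each `i < k-1`, the three votes
`{c_i^1, c_i^2}`, `{c_i^1, c_i^3}`, `{c_i^2, c_i^3}`. -/
def votes (k : ℕ) (N : Finset β) (Aed : Finset (Finset β)) : Multiset (Finset (Cand β)) :=
  Multiset.replicate 2 ({pc} : Finset (Cand β))
    + N.val.map (fun u => (Aed.filter fun e => u ∈ e).image Sum.inl)
    + (Finset.range (k - 1)).val.bind (fun i =>
        ({{cI i 0, cI i 1}, {cI i 0, cI i 2}, {cI i 1, cI i 2}} : Multiset (Finset (Cand β))))

section Reduction

variable {k : ℕ} {N : Finset β} {Aed : Finset (Finset β)}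

def vertexVote (Aed : Finset (Finset β)) (u : β) : Finset (Cand β) :=
  (Aed.filter fun e => u ∈ e).image Sum.inl

/-- Indexing the three votes of the gadget `C(i)` by the candidate they omit makes the symmetry of
the gadget visible. -/
def gadgetVote (i : ℕ) (j : Fin 3) : Finset (Cand β) := (CiSet i).erase (cI i j)

theorem mem_CiSet {i : ℕ} {x : Cand β} : x ∈ CiSet i ↔ ∃ j, cI i j = x := by
  simp only [CiSet, Finset.mem_insert, Finset.mem_singleton]
  constructor
  · rintro (rfl | rfl | rfl) <;> exact ⟨_, rfl⟩
  · rintro ⟨j, rfl⟩; fin_cases j <;> simp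

@[simp] theorem cI_mem_CiSet {i i' : ℕ} {j : Fin 3} : (cI i' j : Cand β) ∈ CiSet i ↔ i' = i := by
  simp [mem_CiSet, cI, eq_comm]

@[simp] theorem pc_notMem_CiSet {i : ℕ} : (pc : Cand β) ∉ CiSet i := by simp [mem_CiSet, pc, cI]

@[simp] theorem inl_notMem_CiSet {e : Finset β} {i : ℕ} : (Sum.inl e : Cand β) ∉ CiSet i := by
  simp [mem_CiSet, cI]

theorem CiSet_disjoint {i i' : ℕ} (h : i ≠ i') :
    Disjoint (CiSet i : Finset (Cand β)) (CiSet i') := by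
  simp [Finset.disjoint_left, mem_CiSet, cI, Ne.symm h]

theorem cI_notMem_of_inter_CiSet_eq_empty {w : Finset (Cand β)} {i : ℕ}
    (hfresh : w ∩ CiSet i = ∅) (j : Fin 3) : (cI i j : Cand β) ∉ w := fun h => by
  simpa [hfresh] using Finset.mem_inter.2 ⟨h, (cI_mem_CiSet (i := i) (j := j)).2 rfl⟩

theorem mem_Ctot {x : Cand β} :
    x ∈ Ctot k Aed ↔ x = pc ∨ (∃ e ∈ Aed, Sum.inl e = x) ∨ ∃ i < k - 1, ∃ j, cI i j = x := by
  simp [Ctot, mem_CiSet]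

theorem pc_mem_Ctot : (pc : Cand β) ∈ Ctot k Aed := Finset.mem_insert_self _ _

theorem inl_mem_Ctot {e : Finset β} (he : e ∈ Aed) : (Sum.inl e : Cand β) ∈ Ctot k Aed :=
  mem_Ctot.2 (Or.inr (Or.inl ⟨e, he, rfl⟩))

theorem cI_mem_Ctot {i : ℕ} (hi : i < k - 1) (j : Fin 3) : (cI i j : Cand β) ∈ Ctot k Aed :=
  mem_Ctot.2 (Or.inr (Or.inr ⟨i, hi, j, rfl⟩))

@[simp] theorem inl_mem_vertexVote {u : β} {e : Finset β} :
    (Sum.inl e : Cand β) ∈ vertexVote Aed u ↔ e ∈ Aed ∧ u ∈ e := by simp [vertexVote]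

@[simp] theorem pc_notMem_vertexVote {u : β} : (pc : Cand β) ∉ vertexVote Aed u := by
  simp [vertexVote, pc]

@[simp] theorem cI_notMem_vertexVote {u : β} {i : ℕ} {j : Fin 3} :
    (cI i j : Cand β) ∉ vertexVote Aed u := by simp [vertexVote, cI]

theorem mem_gadgetVote {i : ℕ} {j : Fin 3} {x : Cand β} :
    x ∈ gadgetVote i j ↔ ∃ l ≠ j, cI i l = x := by
  simp only [gadgetVote, Finset.mem_erase, mem_CiSet]
  constructor
  · rintro ⟨hne, l, rfl⟩; exact ⟨l, fun h => hne (h ▸ rfl), rfl⟩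
  · rintro ⟨l, hl, rfl⟩; exact ⟨by simpa [cI] using hl, l, rfl⟩

@[simp] theorem cI_mem_gadgetVote {i i' : ℕ} {j l : Fin 3} :
    (cI i' l : Cand β) ∈ gadgetVote i j ↔ i' = i ∧ l ≠ j := by
  simp [mem_gadgetVote, cI]; aesop

@[simp] theorem pc_notMem_gadgetVote {i : ℕ} {j : Fin 3} : (pc : Cand β) ∉ gadgetVote i j := by
  simp [mem_gadgetVote, pc, cI]

@[simp] theorem inl_notMem_gadgetVote {e : Finset β} {i : ℕ} {j : Fin 3} :
    (Sum.inl e : Cand β) ∉ gadgetVote i j := by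
  simp [mem_gadgetVote, cI]

theorem gadgetVote_subset_CiSet {i : ℕ} {j : Fin 3} :
    (gadgetVote i j : Finset (Cand β)) ⊆ CiSet i :=
  Finset.erase_subset _ _

theorem gadgetVote_inj {i i' : ℕ} {j j' : Fin 3} :
    (gadgetVote i j : Finset (Cand β)) = gadgetVote i' j' ↔ i = i' ∧ j = j' := by
  refine ⟨fun h => ?_, fun ⟨hi, hj⟩ => hi ▸ hj ▸ rfl⟩
  have hi : i = i' := by
    have : (cI i (j + 1) : Cand β) ∈ gadgetVote i' j' := h ▸ by simp
    exact (cI_mem_gadgetVote.1 this).1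
  subst hi
  refine ⟨rfl, by_contra fun hj => ?_⟩
  have : (cI i j : Cand β) ∈ gadgetVote i j := h ▸ by simp [hj]
  simp at this

theorem vertexVote_ne_gadgetVote {u : β} {i : ℕ} {j : Fin 3} :
    vertexVote Aed u ≠ gadgetVote i j := fun h => by
  have : (cI i (j + 1) : Cand β) ∈ vertexVote Aed u := h ▸ by simp
  simp at this

theorem vertexVote_injOn (hedge : ∀ e ∈ Aed, e.card = 2 ∧ e ⊆ N)
    (hreg : ∀ u ∈ N, (Aed.filter fun e => u ∈ e).card = 3) :
    Set.InjOn (vertexVote Aed) N := by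
  intro u hu u' _ h
  by_contra hne
  -- every edge at `u` would be the edge `{u, u'}`
  have hsub : Aed.filter (fun e => u ∈ e) ⊆ {{u, u'}} := by
    intro e he
    obtain ⟨heA, hue⟩ := Finset.mem_filter.1 he
    have hu'e : u' ∈ e := (inl_mem_vertexVote.1 (h ▸ inl_mem_vertexVote.2 ⟨heA, hue⟩)).2
    refine Finset.mem_singleton.2 (Finset.eq_of_subset_of_card_le ?_ ?_).symm
    · exact Finset.insert_subset hue (Finset.singleton_subset_iff.2 hu'e)
    · rw [(hedge e heA).1, Finset.card_pair hne]
  have := Finset.card_le_card hsub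
  rw [hreg u hu, Finset.card_singleton] at this
  omega

theorem gadget_votes_eq (i : ℕ) :
    ({{cI i 0, cI i 1}, {cI i 0, cI i 2}, {cI i 1, cI i 2}} : Multiset (Finset (Cand β))) =
      Finset.univ.val.map (gadgetVote i) := by
  have h0 : gadgetVote i 0 = ({cI i 1, cI i 2} : Finset (Cand β)) := by
    ext x; simp [mem_gadgetVote, Fin.exists_fin_succ, eq_comm]
  have h1 : gadgetVote i 1 = ({cI i 0, cI i 2} : Finset (Cand β)) := by
    ext x; simp [mem_gadgetVote, Fin.exists_fin_succ, eq_comm]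
  have h2 : gadgetVote i 2 = ({cI i 0, cI i 1} : Finset (Cand β)) := by
    ext x; simp [mem_gadgetVote, Fin.exists_fin_succ, eq_comm]
  rw [Fin.univ_val_map, show List.ofFn (gadgetVote i) =
    [gadgetVote i 0, gadgetVote i 1, gadgetVote i 2] from rfl, h0, h1, h2]
  exact Multiset.coe_eq_coe.2 (List.reverse_perm _).symm

theorem votes_eq (k : ℕ) (N : Finset β) (Aed : Finset (Finset β)) :
    votes k N Aed = Multiset.replicate 2 {pc} + N.val.map (vertexVote Aed)
      + (Finset.range (k - 1)).val.bind fun i => Finset.univ.val.map (gadgetVote i) := by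
  simp only [votes, gadget_votes_eq]; rfl

theorem mem_votes {v : Finset (Cand β)} :
    v ∈ votes k N Aed ↔ v = {pc} ∨ (∃ u ∈ N, vertexVote Aed u = v) ∨
      ∃ i < k - 1, ∃ j, gadgetVote i j = v := by
  simp only [votes_eq, Multiset.mem_add, Multiset.mem_replicate, Multiset.mem_map,
    Multiset.mem_bind, Finset.mem_val, Finset.mem_range, Finset.mem_univ, true_and, ne_eq,
    OfNat.ofNat_ne_zero, not_false_eq_true, or_assoc]

theorem vertexVote_mem_votes {u : β} (hu : u ∈ N) : vertexVote Aed u ∈ votes k N Aed :=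
  mem_votes.2 (Or.inr (Or.inl ⟨u, hu, rfl⟩))

theorem gadgetVote_mem_votes {i : ℕ} (hi : i < k - 1) (j : Fin 3) :
    gadgetVote i j ∈ votes k N Aed :=
  mem_votes.2 (Or.inr (Or.inr ⟨i, hi, j, rfl⟩))

theorem filter_pc_mem_votes : (votes k N Aed).filter (pc ∈ ·) = Multiset.replicate 2 {pc} := by
  rw [votes_eq, Multiset.filter_add, Multiset.filter_add, Multiset.filter_eq_self.2 (by simp),
    Multiset.filter_eq_nil.2 (by simp), Multiset.filter_eq_nil.2 ?_, add_zero, add_zero]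
  simp only [Multiset.mem_bind, Multiset.mem_map]
  rintro _ ⟨i, -, j, -, rfl⟩
  simp

theorem filter_inl_mem_map_vertexVote {e : Finset β} (he : e ∈ Aed) (s : Finset β) :
    (s.val.map (vertexVote Aed)).filter (Sum.inl e ∈ ·) =
      (s.filter (· ∈ e)).val.map (vertexVote Aed) := by
  rw [Multiset.filter_map]
  exact congrArg _ (Multiset.filter_congr fun u _ => by simp [he])

theorem filter_inl_mem_votes {e : Finset β} (he : e ∈ Aed) :
    (votes k N Aed).filter (Sum.inl e ∈ ·) = (N.filter (· ∈ e)).val.map (vertexVote Aed) := by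
  rw [votes_eq, Multiset.filter_add, Multiset.filter_add, filter_inl_mem_map_vertexVote he,
    Multiset.filter_eq_nil.2 (by simp [pc]), Multiset.filter_eq_nil.2 ?_, add_zero, zero_add]
  simp only [Multiset.mem_bind, Multiset.mem_map]
  rintro _ ⟨i, -, j, -, rfl⟩
  simp

theorem filter_cI_mem_votes {i : ℕ} (hi : i < k - 1) (j : Fin 3) :
    (votes k N Aed).filter (cI i j ∈ ·) = (Finset.univ.erase j).val.map (gadgetVote i) := by
  rw [votes_eq, Multiset.filter_add, Multiset.filter_add, Multiset.filter_bind,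
    Multiset.filter_eq_nil.2 (by simp [pc, cI]), Multiset.filter_eq_nil.2 (by simp), zero_add,
    zero_add]
  have hgadget : ∀ i' : ℕ,
      (Finset.univ.val.map (gadgetVote i')).filter ((cI i j : Cand β) ∈ ·) =
        if i' = i then (Finset.univ.erase j).val.map (gadgetVote i) else 0 := by
    intro i'
    split_ifs with h
    · subst h
      rw [Multiset.filter_map, ← Finset.filter_ne', Finset.filter_val]
      exact congrArg _ (Multiset.filter_congr fun l _ => by simp [eq_comm])
    · exact Multiset.filter_eq_nil.2 (by simp [Ne.symm h])
  simp only [hgadget]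
  show ∑ i' ∈ Finset.range (k - 1), _ = _
  rw [Finset.sum_ite_eq' _ _ _, if_pos (Finset.mem_range.2 hi)]

def IsPartialTransversal (k : ℕ) (w : Finset (Cand β)) : Prop :=
  w ⊆ (Finset.range (k - 1)).biUnion CiSet ∧ ∀ i, (w ∩ CiSet i).card ≤ 1

def touchedGadgets (k : ℕ) (w : Finset (Cand β)) : Finset ℕ :=
  (Finset.range (k - 1)).filter fun i => (w ∩ CiSet i).Nonempty

theorem touchedGadgets_subset_range {w : Finset (Cand β)} :
    touchedGadgets k w ⊆ Finset.range (k - 1) :=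
  Finset.filter_subset _ _

namespace IsPartialTransversal

variable {w : Finset (Cand β)}

theorem card_eq (hw : IsPartialTransversal k w) : w.card = (touchedGadgets k w).card := by
  have hw_eq : w = (Finset.range (k - 1)).biUnion fun i => w ∩ CiSet i := by
    ext x
    simp only [Finset.mem_biUnion, Finset.mem_inter]
    refine ⟨fun hx => ?_, fun ⟨_, _, hx, _⟩ => hx⟩
    obtain ⟨i, hi, hxi⟩ := Finset.mem_biUnion.1 (hw.1 hx)
    exact ⟨i, hi, hx, hxi⟩
  conv_lhs => rw [hw_eq]
  rw [Finset.card_biUnion fun i _ i' _ h =>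
      (CiSet_disjoint h).mono Finset.inter_subset_right Finset.inter_subset_right,
    touchedGadgets, Finset.card_filter]
  refine Finset.sum_congr rfl fun i _ => ?_
  split_ifs with h
  · exact le_antisymm (hw.2 i) (Finset.card_pos.2 h)
  · rw [Finset.not_nonempty_iff_eq_empty.1 h, Finset.card_empty]

theorem pc_notMem (hw : IsPartialTransversal k w) : (pc : Cand β) ∉ w := fun h => by
  simpa using hw.1 h

theorem inl_notMem (hw : IsPartialTransversal k w) {e : Finset β} : (Sum.inl e : Cand β) ∉ w :=
  fun h => by simpa using hw.1 h

theorem disjoint_vertexVote (hw : IsPartialTransversal k w) {u : β} :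
    Disjoint (vertexVote Aed u) w := by
  simp only [Finset.disjoint_left, vertexVote, Finset.mem_image]
  rintro _ ⟨e, -, rfl⟩
  exact hw.inl_notMem

theorem card_inter_le_one (hw : IsPartialTransversal k w) {v : Finset (Cand β)}
    (hv : v ∈ votes k N Aed) : (v ∩ w).card ≤ 1 := by
  rcases mem_votes.1 hv with rfl | ⟨u, -, rfl⟩ | ⟨i, -, j, rfl⟩
  · simp [hw.pc_notMem]
  · simp [Finset.disjoint_iff_inter_eq_empty.1 hw.disjoint_vertexVote]
  · exact (Finset.card_le_card (Finset.inter_subset_inter_right gadgetVote_subset_CiSet)).trans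
      (by rw [Finset.inter_comm]; exact hw.2 i)

theorem insert_cI (hw : IsPartialTransversal k w) {i : ℕ} (hi : i < k - 1)
    (hfresh : w ∩ CiSet i = ∅) (j : Fin 3) : IsPartialTransversal k (insert (cI i j) w) := by
  refine ⟨Finset.insert_subset (Finset.mem_biUnion.2 ⟨i, Finset.mem_range.2 hi, by simp⟩) hw.1,
    fun i' => ?_⟩
  by_cases hii : i = i'
  · subst hii
    rw [Finset.insert_inter_of_mem (by simp), hfresh]
    simp
  · rw [Finset.insert_inter_of_notMem (by simpa using hii)]
    exact hw.2 i'

end IsPartialTransversal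

section Margins

variable (ω : ℕ → ℝ) {w : Finset (Cand β)} {W : Multiset (Finset (Cand β))}

theorem marginContrib_pc_le (hω0 : ω 0 = 0) (hmono : ∀ i, ω i ≤ ω (i + 1))
    (hω : ω 2 < 2 * ω 1) (hW : W ≤ votes k N Aed) (hpc : (pc : Cand β) ∉ w) :
    marginContrib ω W w pc ≤ 2 * ω 1 := by
  have hF : W.filter (pc ∈ ·) ≤ Multiset.replicate 2 {pc} :=
    filter_pc_mem_votes (k := k) (N := N) (Aed := Aed) ▸ Multiset.filter_le_filter _ hW
  have hinter : ∀ v ∈ W.filter (pc ∈ ·), (v ∩ w).card ≤ 1 := fun v hv => by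
    rw [Multiset.eq_of_mem_replicate (Multiset.mem_of_le hF hv)]; simp [hpc]
  have hcard : ((W.filter (pc ∈ ·)).card : ℝ) ≤ 2 := by
    exact_mod_cast (Multiset.card_le_card hF).trans_eq (Multiset.card_replicate _ _)
  rw [marginContrib_eq_sum_filter ω W hpc]
  nlinarith [sum_map_le_card_mul ω hω0 hω hinter, hmono 1]

theorem two_mul_le_marginContrib_cI (hω0 : ω 0 = 0) (hmono : ∀ i, ω i ≤ ω (i + 1)) {i : ℕ}
    {j : Fin 3} (hW : ∀ l ≠ j, gadgetVote i l ∈ W) (hfresh : w ∩ CiSet i = ∅) :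
    2 * ω 1 ≤ marginContrib ω W w (cI i j) := by
  have hother : ∀ j : Fin 3, ∃ l₁ l₂, l₁ ≠ l₂ ∧ l₁ ≠ j ∧ l₂ ≠ j := by decide
  obtain ⟨l₁, l₂, hl, hl₁, hl₂⟩ := hother j
  have hdisj : ∀ l, Disjoint (gadgetVote i l) w := fun l =>
    Finset.disjoint_of_subset_left gadgetVote_subset_CiSet
      (Finset.disjoint_iff_inter_eq_empty.2 (by rw [Finset.inter_comm, hfresh]))
  exact two_mul_le_marginContrib ω W hω0 hmono (cI_notMem_of_inter_CiSet_eq_empty hfresh j)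
    (fun h => hl (gadgetVote_inj.1 h).2) (hW l₁ hl₁) (hW l₂ hl₂) (by simp [hl₁.symm])
    (by simp [hl₂.symm]) (hdisj l₁) (hdisj l₂)

end Margins

section Forward

variable (ω : ℕ → ℝ) {w : Finset (Cand β)} {S : Finset β} {W : Multiset (Finset (Cand β))}

theorem filter_pc_mem_sub_vertexVotes (hW : W = votes k N Aed - S.val.map (vertexVote Aed)) :
    W.filter (pc ∈ ·) = Multiset.replicate 2 {pc} := by
  rw [hW, Multiset.filter_sub, filter_pc_mem_votes, Multiset.filter_eq_nil.2 (by simp),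
    Multiset.sub_zero]

theorem gadgetVote_mem_sub_vertexVotes (hW : W = votes k N Aed - S.val.map (vertexVote Aed))
    {i : ℕ} (hi : i < k - 1) (j : Fin 3) : gadgetVote i j ∈ W :=
  hW ▸ Multiset.mem_sub_of_mem_of_notMem (gadgetVote_mem_votes hi j) fun h => by
    obtain ⟨u, -, hu⟩ := Multiset.mem_map.1 h
    exact vertexVote_ne_gadgetVote hu

theorem card_filter_inl_mem_le_one_of_cover (hW : W = votes k N Aed - S.val.map (vertexVote Aed))
    (hedge : ∀ e ∈ Aed, e.card = 2 ∧ e ⊆ N) (hSN : S ⊆ N) {e : Finset β} (he : e ∈ Aed)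
    (hcov : (e ∩ S).Nonempty) : (W.filter (Sum.inl e ∈ ·)).card ≤ 1 := by
  have hle : (S.filter (· ∈ e)).val.map (vertexVote Aed) ≤
      (N.filter (· ∈ e)).val.map (vertexVote Aed) :=
    Multiset.map_le_map (Finset.val_le_iff.2 (Finset.filter_subset_filter _ hSN))
  have hN : (N.filter (· ∈ e)).card ≤ 2 :=
    (Finset.card_le_card fun u hu => (Finset.mem_filter.1 hu).2).trans (hedge e he).1.le
  have hS : 1 ≤ (S.filter (· ∈ e)).card := by
    obtain ⟨u, hu⟩ := hcov
    rw [Finset.mem_inter] at hu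
    exact Finset.card_pos.2 ⟨u, Finset.mem_filter.2 ⟨hu.2, hu.1⟩⟩
  rw [hW, Multiset.filter_sub, filter_inl_mem_votes he, filter_inl_mem_map_vertexVote he,
    Multiset.card_sub hle, Multiset.card_map, Multiset.card_map, Finset.card_val, Finset.card_val]
  omega

theorem two_mul_le_marginContrib_pc (hω0 : ω 0 = 0) (hmono : ∀ i, ω i ≤ ω (i + 1))
    (hW : W = votes k N Aed - S.val.map (vertexVote Aed)) (hpc : (pc : Cand β) ∉ w) :
    2 * ω 1 ≤ marginContrib ω W w pc := by
  have hF : W.filter (fun v => pc ∈ v ∧ Disjoint v w) = W.filter (pc ∈ ·) :=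
    Multiset.filter_congr fun v hv => and_iff_left_of_imp fun hpv => by
      have := filter_pc_mem_sub_vertexVotes hW ▸ Multiset.mem_filter.2 ⟨hv, hpv⟩
      simpa [Multiset.eq_of_mem_replicate this] using hpc
  have := card_filter_disjoint_mul_le_marginContrib ω W hω0 hmono hpc
  rw [hF, filter_pc_mem_sub_vertexVotes hW, Multiset.card_replicate] at this
  exact_mod_cast this

theorem marginContrib_inl_lt_of_cover (hω0 : ω 0 = 0) (hmono : ∀ i, ω i ≤ ω (i + 1))
    (hω : ω 2 < 2 * ω 1) (hW : W = votes k N Aed - S.val.map (vertexVote Aed))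
    (hedge : ∀ e ∈ Aed, e.card = 2 ∧ e ⊆ N) (hSN : S ⊆ N) {e : Finset β} (he : e ∈ Aed)
    (hcov : (e ∩ S).Nonempty) (hw : IsPartialTransversal k w) :
    marginContrib ω W w (Sum.inl e) < 2 * ω 1 := by
  have hcard := card_filter_inl_mem_le_one_of_cover hW hedge hSN he hcov
  exact marginContrib_lt_two_mul ω W hω0 hmono hω hw.inl_notMem (by omega)
    (fun v hv _ => hw.card_inter_le_one (Multiset.mem_of_le (hW ▸ Multiset.sub_le_self _ _) hv))
    (Or.inl (by omega))

theorem marginContrib_cI_lt_of_touched (hω0 : ω 0 = 0) (hmono : ∀ i, ω i ≤ ω (i + 1))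
    (hω : ω 2 < 2 * ω 1) (hW : W = votes k N Aed - S.val.map (vertexVote Aed))
    (hw : IsPartialTransversal k w) {i : ℕ} (hi : i < k - 1) {j : Fin 3}
    (hjw : (cI i j : Cand β) ∉ w) (htouched : (w ∩ CiSet i).Nonempty) :
    marginContrib ω W w (cI i j) < 2 * ω 1 := by
  have hWle : W ≤ votes k N Aed := hW ▸ Multiset.sub_le_self _ _
  have hcard : (W.filter (cI i j ∈ ·)).card ≤ 2 := by
    refine (Multiset.card_le_card (Multiset.filter_le_filter _ hWle)).trans ?_
    rw [filter_cI_mem_votes hi, Multiset.card_map, Finset.card_val, Finset.card_erase_of_mem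
      (Finset.mem_univ _), Finset.card_univ, Fintype.card_fin]
  obtain ⟨x, hx⟩ := htouched
  obtain ⟨hxw, hxi⟩ := Finset.mem_inter.1 hx
  obtain ⟨l, rfl⟩ := mem_CiSet.1 hxi
  have hlj : l ≠ j := by rintro rfl; exact hjw hxw
  have hthird : ∀ j l : Fin 3, l ≠ j → ∃ m, m ≠ j ∧ m ≠ l := by decide
  obtain ⟨m, hmj, hml⟩ := hthird j l hlj
  -- the vote omitting the third candidate `c_i^m` approves `c_i^j` and meets the committee
  exact marginContrib_lt_two_mul ω W hω0 hmono hω hjw hcard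
    (fun v hv _ => hw.card_inter_le_one (Multiset.mem_of_le hWle hv))
    (Or.inr ⟨gadgetVote i m, gadgetVote_mem_sub_vertexVotes hW hi m, by simp [hmj.symm],
      cI i l, Finset.mem_inter.2 ⟨by simp [hml.symm], hxw⟩⟩)

theorem mem_seqNext_of_cover (hω0 : ω 0 = 0) (hmono : ∀ i, ω i ≤ ω (i + 1))
    (hω : ω 2 < 2 * ω 1) (hW : W = votes k N Aed - S.val.map (vertexVote Aed))
    (hedge : ∀ e ∈ Aed, e.card = 2 ∧ e ⊆ N) (hSN : S ⊆ N) (hcov : ∀ e ∈ Aed, (e ∩ S).Nonempty)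
    {pri : Cand β → ℕ}
    (hpri3 : ∀ i ∈ Finset.range (k - 1), ∀ j : Fin 3, pri (cI i j : Cand β) < pri pc)
    (hw : IsPartialTransversal k w) {x : Cand β} (hx : x ∈ seqNext ω pri W (Ctot k Aed) w) :
    (x = pc ∧ ∀ i < k - 1, (w ∩ CiSet i).Nonempty) ∨
      ∃ i < k - 1, w ∩ CiSet i = ∅ ∧ ∃ j, x = cI i j := by
  have hpc := two_mul_le_marginContrib_pc ω hω0 hmono hW hw.pc_notMem
  have hpc' := marginContrib_pc_le ω hω0 hmono hω (hW ▸ Multiset.sub_le_self _ _) hw.pc_notMem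
  have hxpc := marginContrib_le_of_mem_seqNext ω W hx
    (Finset.mem_sdiff.2 ⟨pc_mem_Ctot, hw.pc_notMem⟩)
  obtain ⟨hxC, hxw⟩ := Finset.mem_sdiff.1 (seqNext_subset_sdiff ω W hx)
  rcases mem_Ctot.1 hxC with rfl | ⟨e, he, rfl⟩ | ⟨i, hi, j, rfl⟩
  · refine Or.inl ⟨rfl, fun i hi => Finset.nonempty_iff_ne_empty.2 fun hfresh => ?_⟩
    have := marginContrib_lt_of_mem_seqNext ω W hx
      (Finset.mem_sdiff.2 ⟨cI_mem_Ctot hi 0, cI_notMem_of_inter_CiSet_eq_empty hfresh 0⟩)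
      (hpri3 i (Finset.mem_range.2 hi) 0)
    linarith [two_mul_le_marginContrib_cI ω hω0 hmono
      (fun l _ => gadgetVote_mem_sub_vertexVotes hW hi l) hfresh (j := 0)]
  · linarith [marginContrib_inl_lt_of_cover ω hω0 hmono hω hW hedge hSN he (hcov e he) hw]
  · by_cases hfresh : w ∩ CiSet i = ∅
    · exact Or.inr ⟨i, hi, hfresh, j, rfl⟩
    · linarith [marginContrib_cI_lt_of_touched ω hω0 hmono hω hW hw hi hxw
        (Finset.nonempty_iff_ne_empty.2 hfresh)]

theorem seqNext_nonempty_of_isPartialTransversal {pri : Cand β → ℕ}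
    (hw : IsPartialTransversal k w) : (seqNext ω pri W (Ctot k Aed) w).Nonempty :=
  seqNext_nonempty ω W ⟨pc, Finset.mem_sdiff.2 ⟨pc_mem_Ctot, hw.pc_notMem⟩⟩

theorem isPartialTransversal_seqCommittee_of_cover (hω0 : ω 0 = 0)
    (hmono : ∀ i, ω i ≤ ω (i + 1)) (hω : ω 2 < 2 * ω 1)
    (hW : W = votes k N Aed - S.val.map (vertexVote Aed))
    (hedge : ∀ e ∈ Aed, e.card = 2 ∧ e ⊆ N) (hSN : S ⊆ N) (hcov : ∀ e ∈ Aed, (e ∩ S).Nonempty)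
    {pri : Cand β → ℕ} (hinj : Set.InjOn pri (Ctot k Aed : Set (Cand β)))
    (hpri3 : ∀ i ∈ Finset.range (k - 1), ∀ j : Fin 3, pri (cI i j : Cand β) < pri pc)
    {r : ℕ} (hr : r ≤ k - 1) :
    IsPartialTransversal k (seqCommittee ω pri W (Ctot k Aed) r) ∧
      (seqCommittee ω pri W (Ctot k Aed) r).card = r := by
  induction r with
  | zero => exact ⟨⟨by simp [seqCommittee], by simp [seqCommittee]⟩, rfl⟩
  | succ r ih =>
    obtain ⟨hw, hcard⟩ := ih (by omega)
    obtain ⟨x, hx⟩ := seqNext_nonempty_of_isPartialTransversal ω (pri := pri) (W := W) hw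
    rcases mem_seqNext_of_cover ω hω0 hmono hω hW hedge hSN hcov hpri3 hw hx with
      ⟨-, hall⟩ | ⟨i, hi, hfresh, j, rfl⟩
    · have : (touchedGadgets k (seqCommittee ω pri W (Ctot k Aed) r)).card = k - 1 := by
        rw [touchedGadgets, Finset.filter_true_of_mem fun i hi => hall i
          (Finset.mem_range.1 hi), Finset.card_range]
      have := hw.card_eq
      omega
    · rw [seqCommittee, seqNext_eq_singleton ω W hinj hx, Finset.union_singleton,
        Finset.card_insert_of_notMem (cI_notMem_of_inter_CiSet_eq_empty hfresh j), hcard]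
      exact ⟨hw.insert_cI hi hfresh j, rfl⟩

theorem pc_mem_seqCommittee_of_cover (hω0 : ω 0 = 0) (hmono : ∀ i, ω i ≤ ω (i + 1))
    (hω : ω 2 < 2 * ω 1) (hk : 1 ≤ k) (hW : W = votes k N Aed - S.val.map (vertexVote Aed))
    (hedge : ∀ e ∈ Aed, e.card = 2 ∧ e ⊆ N) (hSN : S ⊆ N) (hcov : ∀ e ∈ Aed, (e ∩ S).Nonempty)
    {pri : Cand β → ℕ} (hinj : Set.InjOn pri (Ctot k Aed : Set (Cand β)))
    (hpri3 : ∀ i ∈ Finset.range (k - 1), ∀ j : Fin 3, pri (cI i j : Cand β) < pri pc) :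
    pc ∈ seqCommittee ω pri W (Ctot k Aed) k := by
  obtain ⟨hw, hcard⟩ := isPartialTransversal_seqCommittee_of_cover ω hω0 hmono hω hW hedge hSN
    hcov hinj hpri3 le_rfl
  obtain ⟨x, hx⟩ := seqNext_nonempty_of_isPartialTransversal ω (pri := pri) (W := W) hw
  rcases mem_seqNext_of_cover ω hω0 hmono hω hW hedge hSN hcov hpri3 hw hx with
    ⟨rfl, -⟩ | ⟨i, hi, hfresh, -⟩
  · obtain ⟨m, rfl⟩ := Nat.exists_eq_add_of_le' hk
    exact Finset.mem_union_right _ hx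
  · have htouched : touchedGadgets k (seqCommittee ω pri W (Ctot k Aed) (k - 1)) =
        Finset.range (k - 1) :=
      Finset.eq_of_subset_of_card_le touchedGadgets_subset_range
        (by rw [← hw.card_eq, hcard, Finset.card_range])
    have := (Finset.mem_filter.1 (htouched ▸ Finset.mem_range.2 hi)).2
    simp [hfresh] at this

end Forward

noncomputable def deletedVertices (N : Finset β) (Aed : Finset (Finset β)) (V' : Multiset (Finset (Cand β))) :
    Finset β :=
  N.filter fun u => vertexVote Aed u ∈ V'

def committeeEdges (Aed : Finset (Finset β)) (w : Finset (Cand β)) : Finset (Finset β) :=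
  Aed.filter fun e => Sum.inl e ∈ w

section Backward

variable (ω : ℕ → ℝ) {w : Finset (Cand β)} {V' : Multiset (Finset (Cand β))}

theorem deletedVertices_subset : deletedVertices N Aed V' ⊆ N :=
  Finset.filter_subset _ _

theorem marginContrib_lt_two_mul_of_pc_mem_seqNext (hω0 : ω 0 = 0)
    (hmono : ∀ i, ω i ≤ ω (i + 1)) (hω : ω 2 < 2 * ω 1) {W : Multiset (Finset (Cand β))}
    (hW : W ≤ votes k N Aed) {pri : Cand β → ℕ}
    (hpri2 : ∀ e ∈ Aed, pri (Sum.inl e : Cand β) < pri pc)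
    (hpri3 : ∀ i ∈ Finset.range (k - 1), ∀ j : Fin 3, pri (cI i j : Cand β) < pri pc)
    (hp : pc ∈ seqNext ω pri W (Ctot k Aed) w) {c : Cand β} (hc : c ∈ Ctot k Aed \ w)
    (hcp : c ≠ pc) : marginContrib ω W w c < 2 * ω 1 := by
  have hpw : (pc : Cand β) ∉ w := (Finset.mem_sdiff.1 (seqNext_subset_sdiff ω W hp)).2
  have hpri : pri c < pri pc := by
    rcases mem_Ctot.1 (Finset.mem_sdiff.1 hc).1 with rfl | ⟨e, he, rfl⟩ | ⟨i, hi, j, rfl⟩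
    · exact absurd rfl hcp
    · exact hpri2 e he
    · exact hpri3 i (Finset.mem_range.2 hi) j
  exact (marginContrib_lt_of_mem_seqNext ω W hp hc hpri).trans_le
    (marginContrib_pc_le ω hω0 hmono hω hW hpw)

theorem inter_deletedVertices_union_nonempty (hω0 : ω 0 = 0) (hmono : ∀ i, ω i ≤ ω (i + 1))
    (hedge : ∀ e ∈ Aed, e.card = 2 ∧ e ⊆ N) (hreg : ∀ u ∈ N, (Aed.filter fun e => u ∈ e).card = 3)
    (hblock : ∀ c ∈ Ctot k Aed \ w, c ≠ pc → marginContrib ω (votes k N Aed - V') w c < 2 * ω 1)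
    {e : Finset β} (he : e ∈ Aed) :
    (e ∩ (deletedVertices N Aed V' ∪ (committeeEdges Aed w).biUnion id)).Nonempty := by
  by_cases hew : (Sum.inl e : Cand β) ∈ w
  · obtain ⟨u, hu⟩ := Finset.card_pos.1 ((hedge e he).1 ▸ two_pos)
    exact ⟨u, Finset.mem_inter.2 ⟨hu, Finset.mem_union_right _ (Finset.mem_biUnion.2
      ⟨e, Finset.mem_filter.2 ⟨he, hew⟩, hu⟩)⟩⟩
  rw [Finset.nonempty_iff_ne_empty, Ne, Finset.eq_empty_iff_forall_notMem]
  intro hS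
  -- otherwise both endpoints keep their vote, disjoint from the committee, and `c(e)` beats `p`
  have hend : ∀ u ∈ e,
      vertexVote Aed u ∈ votes k N Aed - V' ∧ Disjoint (vertexVote Aed u) w := by
    intro u hu
    have huS := fun h => hS u (Finset.mem_inter.2 ⟨hu, h⟩)
    have huN := (hedge e he).2 hu
    refine ⟨Multiset.mem_sub_of_mem_of_notMem (vertexVote_mem_votes huN) fun h =>
      huS (Finset.mem_union_left _ (Finset.mem_filter.2 ⟨huN, h⟩)), ?_⟩
    simp only [Finset.disjoint_left, vertexVote, Finset.mem_image, Finset.mem_filter]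
    rintro _ ⟨e', ⟨he', hue'⟩, rfl⟩ he'w
    exact huS (Finset.mem_union_right _ (Finset.mem_biUnion.2
      ⟨e', Finset.mem_filter.2 ⟨he', he'w⟩, hue'⟩))
  obtain ⟨u₁, u₂, hne, rfl⟩ := Finset.card_eq_two.1 (hedge e he).1
  have h₁ := hend u₁ (by simp)
  have h₂ := hend u₂ (by simp)
  have := two_mul_le_marginContrib ω _ hω0 hmono hew
    (fun h => hne (vertexVote_injOn hedge hreg ((hedge _ he).2 (by simp))
      ((hedge _ he).2 (by simp)) h)) h₁.1 h₂.1 (by simp [he]) (by simp [he]) h₁.2 h₂.2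
  exact (hblock _ (Finset.mem_sdiff.2 ⟨inl_mem_Ctot he, hew⟩) (by simp [pc])).not_ge this

theorem two_le_card_deleted_gadgetVotes (hω0 : ω 0 = 0) (hmono : ∀ i, ω i ≤ ω (i + 1))
    (hblock : ∀ c ∈ Ctot k Aed \ w, c ≠ pc → marginContrib ω (votes k N Aed - V') w c < 2 * ω 1)
    {i : ℕ} (hi : i < k - 1) (hfresh : w ∩ CiSet i = ∅) :
    2 ≤ (Finset.univ.filter fun j => gadgetVote i j ∈ V').card := by
  -- two kept votes of the gadget share a candidate, whose margin would then be `2ω(1)`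
  have hkept : (Finset.univ.filter fun j => gadgetVote i j ∉ V').card ≤ 1 := by
    refine Finset.card_le_one.2 fun l₁ hl₁ l₂ hl₂ => by_contra fun hne => ?_
    have hthird : ∀ l₁ l₂ : Fin 3, l₁ ≠ l₂ → ∃ m, ∀ l, l ≠ m → l = l₁ ∨ l = l₂ := by decide
    obtain ⟨m, hm⟩ := hthird l₁ l₂ hne
    have hW : ∀ l ≠ m, gadgetVote i l ∈ votes k N Aed - V' := fun l hl => by
      refine Multiset.mem_sub_of_mem_of_notMem (gadgetVote_mem_votes hi l) ?_
      rcases hm l hl with rfl | rfl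
      exacts [(Finset.mem_filter.1 hl₁).2, (Finset.mem_filter.1 hl₂).2]
    exact (hblock _ (Finset.mem_sdiff.2 ⟨cI_mem_Ctot hi m,
      cI_notMem_of_inter_CiSet_eq_empty hfresh m⟩) (by simp [pc, cI])).not_ge
      (two_mul_le_marginContrib_cI ω hω0 hmono hW hfresh)
  have := Finset.card_filter_add_card_filter_not (s := Finset.univ)
    (fun j : Fin 3 => gadgetVote i j ∈ V')
  rw [Finset.card_univ, Fintype.card_fin] at this
  omega

theorem card_deletedVertices_add_le (hedge : ∀ e ∈ Aed, e.card = 2 ∧ e ⊆ N)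
    (hreg : ∀ u ∈ N, (Aed.filter fun e => u ∈ e).card = 3) {U : Finset ℕ}
    (hU : ∀ i ∈ U, 2 ≤ (Finset.univ.filter fun j => gadgetVote i j ∈ V').card) :
    (deletedVertices N Aed V').card + 2 * U.card ≤ Multiset.card V' := by
  set D := deletedVertices N Aed V'
  let G : ℕ → Finset (Finset (Cand β)) := fun i =>
    (Finset.univ.filter fun j => gadgetVote i j ∈ V').image (gadgetVote i)
  have hGcard : ∀ i, (G i).card = (Finset.univ.filter fun j => gadgetVote i j ∈ V').card :=
    fun i => Finset.card_image_of_injective _ fun j j' h => (gadgetVote_inj.1 h).2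
  have hdisj : Disjoint (D.image (vertexVote Aed)) (U.biUnion G) := by
    simp only [Finset.disjoint_left, Finset.mem_image, Finset.mem_biUnion, G]
    rintro _ ⟨u, -, rfl⟩ ⟨i, -, j, -, h⟩
    exact vertexVote_ne_gadgetVote h.symm
  have hsub : D.image (vertexVote Aed) ∪ U.biUnion G ⊆ V'.toFinset := by
    intro v hv
    rw [Multiset.mem_toFinset]
    rcases Finset.mem_union.1 hv with hv | hv
    · obtain ⟨u, hu, rfl⟩ := Finset.mem_image.1 hv
      exact (Finset.mem_filter.1 hu).2
    · obtain ⟨i, -, hv⟩ := Finset.mem_biUnion.1 hv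
      obtain ⟨j, hj, rfl⟩ := Finset.mem_image.1 hv
      exact (Finset.mem_filter.1 hj).2
  calc D.card + 2 * U.card ≤ D.card + ∑ i ∈ U, (G i).card := by
        rw [mul_comm, ← smul_eq_mul]
        gcongr
        exact Finset.card_nsmul_le_sum _ _ _ fun i hi => (hGcard i).symm ▸ hU i hi
    _ = (D.image (vertexVote Aed) ∪ U.biUnion G).card := by
        rw [Finset.card_union_of_disjoint hdisj, Finset.card_image_of_injOn
          ((vertexVote_injOn hedge hreg).mono (Finset.coe_subset.2 deletedVertices_subset)),
          Finset.card_biUnion]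
        intro i _ i' _ hii'
        simp only [Function.onFun, Finset.disjoint_left, Finset.mem_image, G]
        rintro _ ⟨j, -, rfl⟩ ⟨j', -, h⟩
        exact hii' (gadgetVote_inj.1 h).1.symm
    _ ≤ V'.toFinset.card := Finset.card_le_card hsub
    _ ≤ Multiset.card V' := Multiset.toFinset_card_le V'

theorem card_committeeEdges_add_card_touchedGadgets_le :
    (committeeEdges Aed w).card + (touchedGadgets k w).card ≤ w.card := by
  have hdisj : Disjoint ((committeeEdges Aed w).image Sum.inl)
      ((touchedGadgets k w).biUnion fun i => w ∩ CiSet i) := by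
    simp only [Finset.disjoint_left, Finset.mem_image, Finset.mem_biUnion, Finset.mem_inter]
    rintro _ ⟨e, -, rfl⟩ ⟨i, -, -, h⟩
    exact inl_notMem_CiSet h
  have hsub : (committeeEdges Aed w).image Sum.inl ∪
      (touchedGadgets k w).biUnion (fun i => w ∩ CiSet i) ⊆ w := by
    refine Finset.union_subset ?_ (Finset.biUnion_subset.2 fun i _ => Finset.inter_subset_left)
    intro x hx
    obtain ⟨e, he, rfl⟩ := Finset.mem_image.1 hx
    exact (Finset.mem_filter.1 he).2
  calc (committeeEdges Aed w).card + (touchedGadgets k w).card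
      ≤ (committeeEdges Aed w).card + ∑ i ∈ touchedGadgets k w, (w ∩ CiSet i).card := by
        gcongr
        simpa using Finset.card_nsmul_le_sum (touchedGadgets k w) (fun i => (w ∩ CiSet i).card) 1
          fun i hi => Finset.card_pos.2 (Finset.mem_filter.1 hi).2
    _ = _ := by
        rw [Finset.card_union_of_disjoint hdisj, Finset.card_image_of_injective _ Sum.inl_injective,
          Finset.card_biUnion fun i _ i' _ h =>
            (CiSet_disjoint h).mono Finset.inter_subset_right Finset.inter_subset_right]
    _ ≤ w.card := Finset.card_le_card hsub

theorem exists_cover_of_pc_mem_seqCommittee (hω0 : ω 0 = 0) (hmono : ∀ i, ω i ≤ ω (i + 1))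
    (hω : ω 2 < 2 * ω 1) (hedge : ∀ e ∈ Aed, e.card = 2 ∧ e ⊆ N)
    (hreg : ∀ u ∈ N, (Aed.filter fun e => u ∈ e).card = 3) {pri : Cand β → ℕ}
    (hinj : Set.InjOn pri (Ctot k Aed : Set (Cand β)))
    (hpri2 : ∀ e ∈ Aed, pri (Sum.inl e : Cand β) < pri pc)
    (hpri3 : ∀ i ∈ Finset.range (k - 1), ∀ j : Fin 3, pri (cI i j : Cand β) < pri pc)
    (hp : pc ∈ seqCommittee ω pri (votes k N Aed - V') (Ctot k Aed) k) :
    ∃ S ⊆ N, S.card ≤ Multiset.card V' ∧ ∀ e ∈ Aed, (e ∩ S).Nonempty := by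
  obtain ⟨r, hr, -, hpnext⟩ := exists_mem_seqNext_of_mem_seqCommittee ω _ hp
  set w := seqCommittee ω pri (votes k N Aed - V') (Ctot k Aed) r
  have hblock := fun c hc hcp => marginContrib_lt_two_mul_of_pc_mem_seqNext ω hω0 hmono hω
    (Multiset.sub_le_self _ V') hpri2 hpri3 hpnext (c := c) hc hcp
  have hdeleted := card_deletedVertices_add_le hedge hreg
    (U := Finset.range (k - 1) \ touchedGadgets k w) fun i hi => by
      obtain ⟨hi, huntouched⟩ := Finset.mem_sdiff.1 hi
      exact two_le_card_deleted_gadgetVotes ω hω0 hmono hblock (Finset.mem_range.1 hi)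
        (Finset.not_nonempty_iff_eq_empty.1 fun h => huntouched (Finset.mem_filter.2 ⟨hi, h⟩))
  have hcommittee := card_committeeEdges_add_card_touchedGadgets_le (k := k) (Aed := Aed) (w := w)
  have hw : w.card ≤ r := card_seqCommittee_le ω (votes k N Aed - V') hinj r
  have huntouched : (Finset.range (k - 1) \ touchedGadgets k w).card =
      k - 1 - (touchedGadgets k w).card := by
    rw [Finset.card_sdiff_of_subset touchedGadgets_subset_range, Finset.card_range]
  have hedges : ((committeeEdges Aed w).biUnion id).card ≤ (committeeEdges Aed w).card * 2 :=
    Finset.card_biUnion_le_card_mul _ _ _ fun e he => (hedge e (Finset.mem_filter.1 he).1).1.le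
  have hunion := Finset.card_union_le (deletedVertices N Aed V') ((committeeEdges Aed w).biUnion id)
  refine ⟨deletedVertices N Aed V' ∪ (committeeEdges Aed w).biUnion id,
    Finset.union_subset deletedVertices_subset (Finset.biUnion_subset.2 fun e he =>
      (hedge e (Finset.mem_filter.1 he).1).2), by omega,
    fun e he => inter_deletedVertices_union_nonempty ω hω0 hmono hedge hreg hblock he⟩

end Backward

end Reduction

theorem ccdv_seq_thiele_general (ω : ℕ → ℝ) (hω0 : ω 0 = 0) (hmono : ∀ i, ω i ≤ ω (i + 1))
    (hω : ω 2 < 2 * ω 1)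
    (k : ℕ) (hk : 1 ≤ k) (κ : ℕ)
    (N : Finset β) (Aed : Finset (Finset β))
    (hedge : ∀ e ∈ Aed, e.card = 2 ∧ e ⊆ N)
    (hreg : ∀ u ∈ N, (Aed.filter fun e => u ∈ e).card = 3)
    (pri : Cand β → ℕ) (hinj : Set.InjOn pri (Ctot k Aed : Set (Cand β)))
    (hpri2 : ∀ e ∈ Aed, pri (Sum.inl e : Cand β) < pri pc)
    (hpri3 : ∀ i ∈ Finset.range (k - 1), ∀ j : Fin 3, pri (cI i j : Cand β) < pri pc) :
    (∃ S ⊆ N, S.card ≤ κ ∧ ∀ e ∈ Aed, (e ∩ S).Nonempty) ↔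
      (∃ V' ≤ votes k N Aed, Multiset.card V' ≤ κ ∧
        pc ∈ seqCommittee ω pri (votes k N Aed - V') (Ctot k Aed) k) := by
  constructor
  · rintro ⟨S, hSN, hScard, hcov⟩
    refine ⟨S.val.map (vertexVote Aed), ?_, by simpa using hScard,
      pc_mem_seqCommittee_of_cover ω hω0 hmono hω hk rfl hedge hSN hcov hinj hpri3⟩
    rw [votes_eq]
    exact (Multiset.map_le_map (Finset.val_le_iff.2 hSN)).trans
      ((Multiset.le_add_left _ _).trans (Multiset.le_add_right _ _))
  · rintro ⟨V', -, hV', hp⟩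
    obtain ⟨S, hSN, hS, hcov⟩ :=
      exists_cover_of_pc_mem_seqCommittee ω hω0 hmono hω hedge hreg hinj hpri2 hpri3 hp
    exact ⟨S, hSN, hS.trans hV', hcov⟩

/-- correctness of the reduction from Vertex Cover on 3-regular graphs to
constructive control by deleting voters for sequential ω-Thiele rules with
`ω(2) < 2ω(1)`. -/
theorem ccdv_seq_thiele (ω : ℕ → ℝ) (hω0 : ω 0 = 0) (hmono : ∀ i, ω i ≤ ω (i + 1))
    (hω : ω 2 < 2 * ω 1)
    (k : ℕ) (hk : 1 ≤ k) (κ : ℕ) (hκ : 1 ≤ κ)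
    (N : Finset β) (Aed : Finset (Finset β))
    (hedge : ∀ e ∈ Aed, e.card = 2 ∧ e ⊆ N)
    (hreg : ∀ u ∈ N, (Aed.filter fun e => u ∈ e).card = 3)
    (hA2 : 2 ≤ Aed.card)
    (pri : Cand β → ℕ) (hinj : Set.InjOn pri (Ctot k Aed : Set (Cand β)))
    (hpri1 : ∀ i ∈ Finset.range (k - 1), ∀ j : Fin 3, ∀ e ∈ Aed,
      pri (cI i j) < pri (Sum.inl e : Cand β))
    (hpri2 : ∀ e ∈ Aed, pri (Sum.inl e : Cand β) < pri pc)
    (hpri3 : ∀ i ∈ Finset.range (k - 1), ∀ j : Fin 3, pri (cI i j : Cand β) < pri pc) :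
    (∃ S ⊆ N, S.card ≤ κ ∧ ∀ e ∈ Aed, (e ∩ S).Nonempty) ↔
      (∃ V' ≤ votes k N Aed, Multiset.card V' ≤ κ ∧
        pc ∈ seqCommittee ω pri (votes k N Aed - V') (Ctot k Aed) k) :=
  ccdv_seq_thiele_general ω hω0 hmono hω k hk κ N Aed hedge hreg pri hinj hpri2 hpri3

end Stmt5
end

section
/- Let G = (N, A) be a d-regular graph with d ≥ 1 and let κ be an integer with 1 ≤ κ ≤ |N|. Construct the election with candidates C = N ∪ {p}, where p is a fresh candidate, and votes V: d−1 copies of the vote {p} and, for each edge {u, u'} ∈ A, one vote {u, u'}. Then G has an independent set of size κ if and only if p is not contained in any ABCCV winning κ-committee of (C, V). -/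
open Finset

attribute [local instance] Classical.propDecidable

universe u

variable {α : Type u}

namespace Stmt8

variable {β : Type u} [DecidableEq β]

/-- Candidate type: a vertex of the graph, or the distinguished candidate `p`. -/
abbrev Cand (β : Type u) := β ⊕ Unit

/-- The distinguished candidate `p`. -/
def pc : Cand β := Sum.inr ()

/-- The candidate set `C = N ∪ {p}`. -/
def Ctot (N : Finset β) : Finset (Cand β) := insert pc (N.image Sum.inl)

/-- The votes: `d − 1` copies of `{p}` and one vote `{u, u'}` per edge `{u, u'}`. -/
def votes (d : ℕ) (Aed : Finset (Finset β)) : Multiset (Finset (Cand β)) :=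
  Multiset.replicate (d - 1) ({pc} : Finset (Cand β))
    + Aed.val.map (fun e => e.image Sum.inl)

/-!
Write a committee `w` as a vertex set `T` plus possibly `p`. Counting the edge votes by their
endpoints in `T` (the graph is `d`-regular and every edge has two endpoints) gives
`score w = [p ∈ w] (d - 1) + d |T| - e(T)`, where `e(T)` is the number of edges inside `T`.
For `|w| = κ` this is `d κ - e(T)` without `p` and `d κ - 1 - e(T)` with `p`. So an independent
`κ`-set outscores every committee containing `p`. Conversely, if every `κ`-set spans an edge,
deleting an endpoint of that edge lowers `e`, so `p` together with a `(κ - 1)`-set minimizing `e`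
scores at least as much as every `κ`-committee.
-/

def incidentEdges (Aed : Finset (Finset β)) (T : Finset β) : Finset (Finset β) :=
  Aed.filter fun e => (T ∩ e).Nonempty

def inducedEdges (Aed : Finset (Finset β)) (T : Finset β) : Finset (Finset β) :=
  Aed.filter fun e => e ⊆ T

lemma card_inter_of_card_eq_two {e : Finset β} (he : e.card = 2) (T : Finset β) :
    (T ∩ e).card = (if (T ∩ e).Nonempty then 1 else 0) + (if e ⊆ T then 1 else 0) := by
  obtain ⟨a, b, hab, rfl⟩ := Finset.card_eq_two.mp he
  by_cases ha : a ∈ T <;> by_cases hb : b ∈ T <;>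
    simp [ha, hb, hab, Finset.insert_subset_iff, Finset.inter_insert_of_mem,
      Finset.inter_insert_of_notMem, Finset.inter_singleton_of_mem,
      Finset.inter_singleton_of_notMem]

lemma card_incidentEdges_add_card_inducedEdges {d : ℕ} {N : Finset β} {Aed : Finset (Finset β)}
    (hcard : ∀ e ∈ Aed, e.card = 2) (hreg : ∀ u ∈ N, (Aed.filter fun e => u ∈ e).card = d)
    {T : Finset β} (hT : T ⊆ N) :
    (incidentEdges Aed T).card + (inducedEdges Aed T).card = d * T.card := by
  rw [incidentEdges, inducedEdges, Finset.card_filter, Finset.card_filter,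
    ← Finset.sum_add_distrib,
    ← Finset.sum_congr rfl fun e he => card_inter_of_card_eq_two (hcard e he) T,
    Finset.sum_card_inter fun u hu => hreg u (hT hu), mul_comm]

lemma toLeft_image_inl (S : Finset β) : (S.image Sum.inl : Finset (Cand β)).toLeft = S := by
  ext; simp

lemma toLeft_insert_pc (w : Finset (Cand β)) : (insert pc w).toLeft = w.toLeft :=
  Finset.toLeft_insert_inr

lemma toLeft_Ctot (N : Finset β) : (Ctot N).toLeft = N := by
  rw [Ctot, toLeft_insert_pc, toLeft_image_inl]

lemma card_eq_card_toLeft_add (w : Finset (Cand β)) :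
    w.card = w.toLeft.card + if pc ∈ w then 1 else 0 := by
  have hR : w.toRight = if pc ∈ w then {()} else ∅ := by
    ext ⟨⟩; split_ifs with h <;> simpa [pc] using h
  rw [← Finset.card_toLeft_add_card_toRight, hR]
  split_ifs <;> rfl

lemma abccvScore_votes (d : ℕ) (Aed : Finset (Finset β)) (w : Finset (Cand β)) :
    abccvScore (votes d Aed) w
      = (if pc ∈ w then d - 1 else 0) + (incidentEdges Aed w.toLeft).card := by
  rw [abccvScore, votes, Multiset.filter_add, Multiset.card_add, Multiset.filter_map,
    Multiset.card_map]
  congr 1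
  · split_ifs with h
    · rw [Multiset.filter_eq_self.mpr (by simp [Multiset.mem_replicate, h]),
        Multiset.card_replicate]
    · rw [Multiset.filter_eq_nil.mpr (by simp [Multiset.mem_replicate, h]), Multiset.card_zero]
  · rw [incidentEdges, Finset.card_def, Finset.filter_val]
    congr 1
    refine Multiset.filter_congr fun e _ => ?_
    simp only [Function.comp_apply, Finset.Nonempty, Finset.mem_inter, Finset.mem_image,
      Finset.mem_toLeft]
    constructor
    · rintro ⟨_, ⟨u, hu, rfl⟩, huw⟩
      exact ⟨u, huw, hu⟩
    · rintro ⟨u, huw, hu⟩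
      exact ⟨_, ⟨u, hu, rfl⟩, huw⟩

lemma card_inducedEdges_erase_lt {Aed : Finset (Finset β)} {S e : Finset β} (he : e ∈ Aed)
    (heS : e ⊆ S) {u : β} (hu : u ∈ e) :
    (inducedEdges Aed (S.erase u)).card < (inducedEdges Aed S).card := by
  refine Finset.card_lt_card ((Finset.ssubset_iff_of_subset ?_).mpr ⟨e, ?_, ?_⟩)
  · intro e' h
    obtain ⟨he', he'S⟩ := Finset.mem_filter.mp h
    exact Finset.mem_filter.mpr ⟨he', he'S.trans (S.erase_subset u)⟩
  · exact Finset.mem_filter.mpr ⟨he, heS⟩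
  · exact fun h => S.notMem_erase u ((Finset.mem_filter.mp h).2 hu)

section Committees

variable {d : ℕ} {N : Finset β} {Aed : Finset (Finset β)}

lemma image_inl_mem_powersetCard_Ctot {S : Finset β} (hS : S ⊆ N) :
    S.image Sum.inl ∈ (Ctot N).powersetCard S.card := by
  refine Finset.mem_powersetCard.mpr ⟨?_, Finset.card_image_of_injective _ Sum.inl_injective⟩
  exact (Finset.image_subset_image hS).trans (Finset.subset_insert _ _)

lemma insert_pc_mem_powersetCard_Ctot {T : Finset β} (hT : T ⊆ N) :
    insert pc (T.image Sum.inl) ∈ (Ctot N).powersetCard (T.card + 1) := by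
  refine Finset.mem_powersetCard.mpr
    ⟨Finset.insert_subset_insert _ (Finset.image_subset_image hT), ?_⟩
  rw [Finset.card_insert_of_notMem (by simp [pc]),
    Finset.card_image_of_injective _ Sum.inl_injective]

lemma abccvScore_votes_add_card_inducedEdges (hd : 1 ≤ d) (hcard : ∀ e ∈ Aed, e.card = 2)
    (hreg : ∀ u ∈ N, (Aed.filter fun e => u ∈ e).card = d) {w : Finset (Cand β)}
    (hw : w ⊆ Ctot N) :
    abccvScore (votes d Aed) w + (inducedEdges Aed w.toLeft).card + (if pc ∈ w then 1 else 0)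
      = d * w.card := by
  have hT : w.toLeft ⊆ N := toLeft_Ctot N ▸ Finset.toLeft_subset_toLeft hw
  have := card_incidentEdges_add_card_inducedEdges hcard hreg hT
  rw [abccvScore_votes, card_eq_card_toLeft_add w]
  split_ifs <;> simp only [mul_add, mul_one, add_zero] <;> omega

lemma pc_notMem_of_mem_abccvWinners (hd : 1 ≤ d) (hcard : ∀ e ∈ Aed, e.card = 2)
    (hreg : ∀ u ∈ N, (Aed.filter fun e => u ∈ e).card = d) {S : Finset β} (hSN : S ⊆ N)
    (hS : ∀ e ∈ Aed, ¬ e ⊆ S) {w : Finset (Cand β)}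
    (hw : w ∈ abccvWinners (Ctot N) (votes d Aed) S.card) : pc ∉ w := by
  intro hpw
  obtain ⟨hwκ, hmax⟩ := Finset.mem_filter.mp hw
  obtain ⟨hwC, hwcard⟩ := Finset.mem_powersetCard.mp hwκ
  have hSκ := image_inl_mem_powersetCard_Ctot hSN
  have hscoreS := abccvScore_votes_add_card_inducedEdges hd hcard hreg
    (Finset.mem_powersetCard.mp hSκ).1
  have hscorew := abccvScore_votes_add_card_inducedEdges hd hcard hreg hwC
  have hind : inducedEdges Aed S = ∅ := Finset.filter_eq_empty_iff.mpr hS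
  rw [toLeft_image_inl, hind, Finset.card_empty, if_neg (by simp [pc]),
    (Finset.mem_powersetCard.mp hSκ).2] at hscoreS
  rw [if_pos hpw, hwcard] at hscorew
  have := hmax _ hSκ
  omega

lemma insert_pc_mem_abccvWinners (hd : 1 ≤ d) (hcard : ∀ e ∈ Aed, e.card = 2)
    (hreg : ∀ u ∈ N, (Aed.filter fun e => u ∈ e).card = d) {κ : ℕ} (hκ : 1 ≤ κ)
    {T₀ : Finset β} (hT₀ : T₀ ∈ N.powersetCard (κ - 1))
    (hmin : ∀ T ∈ N.powersetCard (κ - 1),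
      (inducedEdges Aed T₀).card ≤ (inducedEdges Aed T).card)
    (hdep : ∀ S ⊆ N, S.card = κ → ∃ e ∈ Aed, e ⊆ S) :
    insert pc (T₀.image Sum.inl) ∈ abccvWinners (Ctot N) (votes d Aed) κ := by
  obtain ⟨hT₀N, hT₀card⟩ := Finset.mem_powersetCard.mp hT₀
  have hw₀ := insert_pc_mem_powersetCard_Ctot hT₀N
  rw [hT₀card, Nat.sub_add_cancel hκ] at hw₀
  obtain ⟨hw₀C, hw₀card⟩ := Finset.mem_powersetCard.mp hw₀
  have hscore₀ := abccvScore_votes_add_card_inducedEdges hd hcard hreg hw₀C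
  rw [hw₀card, if_pos (Finset.mem_insert_self _ _), toLeft_insert_pc, toLeft_image_inl]
    at hscore₀
  refine Finset.mem_filter.mpr ⟨hw₀, fun w hw => ?_⟩
  obtain ⟨hwC, hwκ⟩ := Finset.mem_powersetCard.mp hw
  have hscore := abccvScore_votes_add_card_inducedEdges hd hcard hreg hwC
  have hTN : w.toLeft ⊆ N := toLeft_Ctot N ▸ Finset.toLeft_subset_toLeft hwC
  have hTcard := card_eq_card_toLeft_add w
  rw [hwκ] at hscore hTcard
  by_cases hpw : pc ∈ w
  · rw [if_pos hpw] at hscore hTcard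
    have := hmin _ (Finset.mem_powersetCard.mpr ⟨hTN, by omega⟩)
    omega
  · rw [if_neg hpw] at hscore hTcard
    obtain ⟨e, he, heT⟩ := hdep _ hTN hTcard.symm
    obtain ⟨u, hu⟩ := Finset.card_pos.mp (by rw [hcard e he]; norm_num)
    have hlt := card_inducedEdges_erase_lt he heT hu
    have := hmin _ (Finset.mem_powersetCard.mpr
      ⟨(Finset.erase_subset _ _).trans hTN, by rw [Finset.card_erase_of_mem (heT hu)]; omega⟩)
    omega

end Committees

/-- correctness of the reduction from Independent Set on `d`-regular graphs
to Nonwinning Testing for ABCCV. -/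
theorem nonwinning_abccv (d : ℕ) (hd : 1 ≤ d)
    (N : Finset β) (Aed : Finset (Finset β))
    (hedge : ∀ e ∈ Aed, e.card = 2 ∧ e ⊆ N)
    (hreg : ∀ u ∈ N, (Aed.filter fun e => u ∈ e).card = d)
    (κ : ℕ) (hκ1 : 1 ≤ κ) (hκ2 : κ ≤ N.card) :
    (∃ S ⊆ N, S.card = κ ∧ ∀ e ∈ Aed, ¬ e ⊆ S) ↔
      (∀ w ∈ abccvWinners (Ctot N) (votes d Aed) κ, pc ∉ w) := by
  have hcard : ∀ e ∈ Aed, e.card = 2 := fun e he => (hedge e he).1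
  constructor
  · rintro ⟨S, hSN, rfl, hS⟩ w hw
    exact pc_notMem_of_mem_abccvWinners hd hcard hreg hSN hS hw
  · contrapose!
    intro hdep
    obtain ⟨T₀, hT₀, hmin⟩ := Finset.exists_min_image (N.powersetCard (κ - 1))
      (fun T => (inducedEdges Aed T).card) (Finset.powersetCard_nonempty.mpr (by omega))
    exact ⟨_, insert_pc_mem_abccvWinners hd hcard hreg hκ1 hT₀ hmin hdep,
      Finset.mem_insert_self _ _⟩

end Stmt8
end

section
/- Let G = (R ∪ B, E) be a bipartite graph with no isolated vertices in which every r ∈ R has degree exactly d ≥ 1, and let κ be an integer with 1 ≤ κ ≤ |B|. Construct the election with candidates: one candidate per b ∈ B (identified with b); for each r ∈ R, a set C(r) of |B| + 2 fresh candidates, these sets pairwise disjoint; a fresh candidate p; and a set X of 2κ + d fresh candidates; and votes V: one vote B ∪ X and, for each r ∈ R, one vote v(r) = N_G(r) ∪ C(r). Then there exists B' ⊆ B with |B'| = κ dominating R if and only if p is not contained in any MAV winning κ-committee of (C, V). -/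
/-! Write `D = |B| + d + κ`. For a `κ`-committee `w`, the Hamming distance to the vote
`B ∪ X` is `|B| + 3κ + d - 2|w ∩ (B ∪ X)|`: it is at least `D`, and at most `D + 1` only if
`w ⊆ B ∪ X`. The distance to `v(r)` is `|B| + κ + d + 2 - 2|w ∩ v(r)|`, at most `D + 1`
exactly when `w` meets `v(r)`. So a dominating set has score `D`, which forces every winner
into `B ∪ X`, away from `p`. Conversely, `p` together with `κ - 1` candidates of `X` has score
at most `D + 2`; if it is not winning, some committee has score at most `D + 1`, hence lies in
`B ∪ X` and meets every `v(r)` inside `N(r)`, and its blue part, padded to size `κ`,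
dominates `R`. -/

open Finset

attribute [local instance] Classical.propDecidable

universe u

variable {α : Type u}

namespace Stmt10

variable {β : Type u} [DecidableEq β]

/-- Candidate type: a blue vertex `b ∈ B`, a fresh candidate of a set `C(r)`,
a fresh candidate of the set `X`, or the distinguished candidate `p`. -/
abbrev Cand (β : Type u) := β ⊕ (β × ℕ) ⊕ ℕ ⊕ Unit

/-- The distinguished candidate `p`. -/
def pc : Cand β := Sum.inr (Sum.inr (Sum.inr ()))

/-- The set `C(r)` of `|B| + 2` fresh candidates created for the red vertex `r`. -/
def CrSet (B : Finset β) (r : β) : Finset (Cand β) :=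
  (Finset.range (B.card + 2)).image fun i => (Sum.inr (Sum.inl (r, i)) : Cand β)

/-- The set `X` of `2κ + d` fresh candidates. -/
def Xset (κ d : ℕ) : Finset (Cand β) :=
  (Finset.range (2 * κ + d)).image fun j => (Sum.inr (Sum.inr (Sum.inl j)) : Cand β)

/-- The neighbors of the red vertex `r`. -/
def nbrR (Ed : Finset (β × β)) (r : β) : Finset β := (Ed.filter fun e => e.1 = r).image Prod.snd

/-- The neighbors of the blue vertex `b`. -/
def nbrB (Ed : Finset (β × β)) (b : β) : Finset β := (Ed.filter fun e => e.2 = b).image Prod.fst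

/-- The whole candidate set. -/
def Ctot (R B : Finset β) (κ d : ℕ) : Finset (Cand β) :=
  insert pc (B.image Sum.inl ∪ R.biUnion (CrSet B) ∪ Xset κ d)

/-- The votes: one vote `B ∪ X` and, for each `r ∈ R`, one vote
`v(r) = N_G(r) ∪ C(r)`. -/
def votes (Ed : Finset (β × β)) (R B : Finset β) (κ d : ℕ) : Multiset (Finset (Cand β)) :=
  (B.image Sum.inl ∪ Xset κ d) ::ₘ
    R.val.map (fun r => (nbrR Ed r).image Sum.inl ∪ CrSet B r)


section

variable {γ : Type*} [DecidableEq γ]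

def hamming (s t : Finset γ) : ℕ := (s \ t).card + (t \ s).card

lemma hamming_add_two_mul_card_inter (s t : Finset γ) :
    hamming s t + 2 * (s ∩ t).card = s.card + t.card := by
  have hs := card_sdiff_add_card_inter s t
  have ht := card_sdiff_add_card_inter t s
  rw [inter_comm] at ht
  unfold hamming
  omega

lemma hamming_add_card_of_subset {s t : Finset γ} (h : s ⊆ t) :
    hamming s t + s.card = t.card := by
  have := hamming_add_two_mul_card_inter s t
  rw [inter_eq_left.2 h] at this
  omega

lemma subset_of_hamming_add_card_lt {s t : Finset γ} (h : hamming s t + s.card < t.card + 2) :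
    s ⊆ t := by
  have := hamming_add_two_mul_card_inter s t
  refine inter_eq_left.1 (eq_of_subset_of_card_le inter_subset_left ?_)
  omega

lemma hamming_add_two_le_of_mem {s t : Finset γ} {a : γ} (hs : a ∈ s) (ht : a ∈ t) :
    hamming s t + 2 ≤ s.card + t.card := by
  have := hamming_add_two_mul_card_inter s t
  have : 0 < (s ∩ t).card := card_pos.2 ⟨a, mem_inter.2 ⟨hs, ht⟩⟩
  omega

lemma inter_nonempty_of_hamming_lt {s t : Finset γ} (h : hamming s t < s.card + t.card) :
    (s ∩ t).Nonempty := by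
  have := hamming_add_two_mul_card_inter s t
  exact card_pos.1 (by omega)

lemma hamming_le_card_add_card (s t : Finset γ) : hamming s t ≤ s.card + t.card := by
  have := hamming_add_two_mul_card_inter s t
  omega

lemma mavScore_le_iff {V : Multiset (Finset γ)} {w : Finset γ} {n : ℕ} :
    mavScore V w ≤ n ↔ ∀ v ∈ V, hamming w v ≤ n := by
  simp only [mavScore, Multiset.sup_le, Multiset.forall_mem_map_iff, hamming]

lemma mavScore_le_of_mem_mavWinners {C : Finset γ} {V : Multiset (Finset γ)} {k : ℕ}
    {w w' : Finset γ} (hw : w ∈ mavWinners C V k) (hw' : w' ∈ C.powersetCard k) :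
    mavScore V w ≤ mavScore V w' :=
  (mem_filter.1 hw).2 w' hw'

lemma exists_mavScore_lt_of_notMem_mavWinners {C : Finset γ} {V : Multiset (Finset γ)} {k : ℕ}
    {w : Finset γ} (hw : w ∈ C.powersetCard k) (hwin : w ∉ mavWinners C V k) :
    ∃ w' ∈ C.powersetCard k, mavScore V w' < mavScore V w := by
  by_contra! h
  exact hwin (mem_filter.2 ⟨hw, h⟩)

end

def blueVote (B : Finset β) (κ d : ℕ) : Finset (Cand β) := B.image Sum.inl ∪ Xset κ d

def redVote (Ed : Finset (β × β)) (B : Finset β) (r : β) : Finset (Cand β) :=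
  (nbrR Ed r).image Sum.inl ∪ CrSet B r

lemma mem_nbrR {Ed : Finset (β × β)} {r b : β} : b ∈ nbrR Ed r ↔ (r, b) ∈ Ed := by
  simp [nbrR]

lemma card_Xset (κ d : ℕ) : (Xset κ d : Finset (Cand β)).card = 2 * κ + d := by
  rw [Xset, card_image_of_injective _ (fun _ _ h => by simpa using h), card_range]

lemma card_blueVote (B : Finset β) (κ d : ℕ) :
    (blueVote B κ d).card = B.card + (2 * κ + d) := by
  rw [blueVote, card_union_of_disjoint (by simp [disjoint_left, Xset]),
    card_image_of_injective _ Sum.inl_injective, card_Xset]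

lemma card_redVote (Ed : Finset (β × β)) (B : Finset β) (r : β) :
    (redVote Ed B r).card = (nbrR Ed r).card + (B.card + 2) := by
  rw [redVote, card_union_of_disjoint (by simp [disjoint_left, CrSet]),
    card_image_of_injective _ Sum.inl_injective, CrSet,
    card_image_of_injective _ (fun _ _ h => by simpa using h), card_range]

lemma pc_notMem_blueVote (B : Finset β) (κ d : ℕ) : pc ∉ blueVote B κ d := by
  simp [pc, blueVote, Xset]

lemma pc_notMem_Xset (κ d : ℕ) : (pc : Cand β) ∉ Xset κ d := by
  simp [pc, Xset]

lemma card_insert_pc {κ d : ℕ} {X' : Finset (Cand β)} (hX' : X' ⊆ Xset κ d) :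
    (insert pc X').card = X'.card + 1 :=
  card_insert_of_notMem fun h => pc_notMem_Xset κ d (hX' h)

lemma exists_mem_nbrR_of_mem_blueVote_of_mem_redVote {Ed : Finset (β × β)} {B : Finset β}
    {κ d : ℕ} {r : β} {c : Cand β} (hb : c ∈ blueVote B κ d) (hr : c ∈ redVote Ed B r) :
    ∃ b ∈ B, (r, b) ∈ Ed ∧ c = Sum.inl b := by
  simp only [blueVote, redVote, Xset, CrSet, mem_union, mem_image] at hb hr
  rcases hb with ⟨b, hbB, rfl⟩ | ⟨j, -, rfl⟩ <;>
    rcases hr with ⟨b', hb', hc⟩ | ⟨i, -, hc⟩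
  · exact ⟨b, hbB, mem_nbrR.1 (Sum.inl_injective hc ▸ hb'), rfl⟩
  all_goals simp at hc

section Reduction

variable {R B : Finset β} {Ed : Finset (β × β)} {κ d : ℕ}

lemma mavScore_votes_le_iff {w : Finset (Cand β)} {n : ℕ} :
    mavScore (votes Ed R B κ d) w ≤ n ↔
      hamming w (blueVote B κ d) ≤ n ∧ ∀ r ∈ R, hamming w (redVote Ed B r) ≤ n := by
  simp [mavScore_le_iff, votes, blueVote, redVote]

lemma subset_blueVote_of_mavScore_le {w : Finset (Cand β)} (hw : w.card = κ)
    (h : mavScore (votes Ed R B κ d) w ≤ B.card + d + κ + 1) : w ⊆ blueVote B κ d := by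
  apply subset_of_hamming_add_card_lt
  have := (mavScore_votes_le_iff.1 h).1
  rw [card_blueVote]
  omega

lemma mavScore_le_of_dominates (hdeg : ∀ r ∈ R, (nbrR Ed r).card = d) {B' : Finset β}
    (hB' : B' ⊆ B) (hcard : B'.card = κ) (hdom : ∀ r ∈ R, ∃ b ∈ B', (r, b) ∈ Ed) :
    mavScore (votes Ed R B κ d) (B'.image Sum.inl) ≤ B.card + d + κ := by
  have hcard' : (B'.image (Sum.inl : β → Cand β)).card = κ := by
    rw [card_image_of_injective _ Sum.inl_injective, hcard]
  refine mavScore_votes_le_iff.2 ⟨?_, fun r hr => ?_⟩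
  · have := hamming_add_card_of_subset
      ((image_subset_image hB').trans subset_union_left : B'.image Sum.inl ⊆ blueVote B κ d)
    rw [card_blueVote] at this
    omega
  · obtain ⟨b, hb, hrb⟩ := hdom r hr
    have := hamming_add_two_le_of_mem (mem_image_of_mem Sum.inl hb)
      (mem_union_left (CrSet B r) (mem_image_of_mem Sum.inl (mem_nbrR.2 hrb)))
    rw [← redVote, card_redVote, hdeg r hr] at this
    omega

lemma mavScore_insert_pc_le (hdeg : ∀ r ∈ R, (nbrR Ed r).card = d) {X' : Finset (Cand β)}
    (hX' : X' ⊆ Xset κ d) (hcard : X'.card + 1 = κ) :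
    mavScore (votes Ed R B κ d) (insert pc X') ≤ B.card + d + κ + 2 := by
  have hcard' : (insert pc X').card = κ := by rw [card_insert_pc hX', hcard]
  refine mavScore_votes_le_iff.2 ⟨?_, fun r hr => ?_⟩
  · have hsub : X' ⊆ blueVote B κ d := hX'.trans subset_union_right
    have hX'dist := hamming_add_card_of_subset hsub
    have hdist : hamming (insert pc X') (blueVote B κ d) = hamming X' (blueVote B κ d) + 1 := by
      simp only [hamming, insert_sdiff_of_notMem _ (pc_notMem_blueVote B κ d),
        sdiff_insert_of_notMem (pc_notMem_blueVote B κ d),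
        card_insert_pc (sdiff_subset.trans hX')]
      omega
    rw [card_blueVote] at hX'dist
    omega
  · have := hamming_le_card_add_card (insert pc X') (redVote Ed B r)
    rw [card_redVote, hdeg r hr, hcard'] at this
    omega

lemma exists_dominating_of_mavScore_le {w : Finset (Cand β)} (hw : w.card = κ)
    (hκ : κ ≤ B.card) (hdeg : ∀ r ∈ R, (nbrR Ed r).card = d)
    (h : mavScore (votes Ed R B κ d) w ≤ B.card + d + κ + 1) :
    ∃ B' ⊆ B, B'.card = κ ∧ ∀ r ∈ R, ∃ b ∈ B', (r, b) ∈ Ed := by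
  set B₀ := B.filter fun b => Sum.inl b ∈ w
  have hB₀ : B₀.card ≤ κ := by
    rw [← hw, ← card_image_of_injective B₀ (f := (Sum.inl : β → Cand β))
      Sum.inl_injective]
    exact card_le_card fun c hc => by
      obtain ⟨b, hb, rfl⟩ := mem_image.1 hc
      exact (mem_filter.1 hb).2
  obtain ⟨B', hB₀B', hB'B, hB'card⟩ :=
    exists_subsuperset_card_eq (filter_subset _ B) hB₀ hκ
  refine ⟨B', hB'B, hB'card, fun r hr => ?_⟩
  have hdist := (mavScore_votes_le_iff.1 h).2 r hr
  obtain ⟨c, hc⟩ := inter_nonempty_of_hamming_lt (s := w) (t := redVote Ed B r)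
    (by rw [card_redVote, hdeg r hr]; omega)
  obtain ⟨hcw, hcr⟩ := mem_inter.1 hc
  obtain ⟨b, hbB, hrb, rfl⟩ :=
    exists_mem_nbrR_of_mem_blueVote_of_mem_redVote (subset_blueVote_of_mavScore_le hw h hcw) hcr
  exact ⟨b, hB₀B' (mem_filter.2 ⟨hbB, hcw⟩), hrb⟩

end Reduction

theorem nonwinning_mav_general
    (R B : Finset β) (Ed : Finset (β × β))
    (d : ℕ)
    (hdegR : ∀ r ∈ R, (nbrR Ed r).card = d)
    (κ : ℕ) (hκ1 : 1 ≤ κ) (hκ2 : κ ≤ B.card) :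
    (∃ B' ⊆ B, B'.card = κ ∧ ∀ r ∈ R, ∃ b ∈ B', (r, b) ∈ Ed) ↔
      (∀ w ∈ mavWinners (Ctot R B κ d) (votes Ed R B κ d) κ, pc ∉ w) := by
  constructor
  · rintro ⟨B', hB'B, hB'card, hdom⟩ w hw hpw
    have hB'C : B'.image Sum.inl ∈ (Ctot R B κ d).powersetCard κ := by
      refine mem_powersetCard.2 ⟨(image_subset_image hB'B).trans fun c hc =>
        mem_insert_of_mem (mem_union_left _ (mem_union_left _ hc)), ?_⟩
      rw [card_image_of_injective _ Sum.inl_injective, hB'card]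
    have hscore := (mavScore_le_of_mem_mavWinners hw hB'C).trans
      (mavScore_le_of_dominates hdegR hB'B hB'card hdom)
    have hwcard := (mem_powersetCard.1 (mem_filter.1 hw).1).2
    exact pc_notMem_blueVote B κ d
      (subset_blueVote_of_mavScore_le hwcard (hscore.trans (Nat.le_succ _)) hpw)
  · intro hp
    obtain ⟨X', hX'X, hX'card⟩ := exists_subset_card_eq (s := (Xset κ d : Finset (Cand β)))
      (n := κ - 1) (by rw [card_Xset]; omega)
    have hpC : insert pc X' ∈ (Ctot R B κ d).powersetCard κ := by
      refine mem_powersetCard.2 ⟨insert_subset_insert _ (hX'X.trans subset_union_right), ?_⟩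
      rw [card_insert_pc hX'X]
      omega
    obtain ⟨w, hw, hlt⟩ := exists_mavScore_lt_of_notMem_mavWinners hpC
      (fun h => hp _ h (mem_insert_self _ _))
    have hpscore : mavScore (votes Ed R B κ d) (insert pc X') ≤ B.card + d + κ + 2 :=
      mavScore_insert_pc_le hdegR hX'X (by omega)
    exact exists_dominating_of_mavScore_le (mem_powersetCard.1 hw).2 hκ2 hdegR (by omega)

/-- correctness of the reduction from Red-Blue Dominating Set to
Nonwinning Testing for MAV. -/
theorem nonwinning_mav
    (R B : Finset β) (hRB : Disjoint R B) (Ed : Finset (β × β))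
    (hEd : ∀ e ∈ Ed, e.1 ∈ R ∧ e.2 ∈ B)
    (d : ℕ) (hd : 1 ≤ d)
    (hdegR : ∀ r ∈ R, (nbrR Ed r).card = d)
    (hnoisoB : ∀ b ∈ B, (nbrB Ed b).Nonempty)
    (κ : ℕ) (hκ1 : 1 ≤ κ) (hκ2 : κ ≤ B.card) :
    (∃ B' ⊆ B, B'.card = κ ∧ ∀ r ∈ R, ∃ b ∈ B', (r, b) ∈ Ed) ↔
      (∀ w ∈ mavWinners (Ctot R B κ d) (votes Ed R B κ d) κ, pc ∉ w) :=
  nonwinning_mav_general R B Ed d hdegR κ hκ1 hκ2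

end Stmt10
end

section
/- Let φ be an ABMV rule that is α-efficient and neutral. Let G = (R ∪ B, E) be a bipartite graph with parts R (nonempty) and B, and let κ be an integer with 0 ≤ κ ≤ |B|. Let C = R ∪ {p} with p a fresh candidate, let k = |R|, and for each b ∈ B let v(b) = N_G(b) ⊆ R. Then there exists B' ⊆ B with |B'| ≤ κ dominating R if and only if there exists B' ⊆ B with |B'| ≤ κ such that p is not contained in any winning k-committee of φ at the election (C, {v(b) : b ∈ B'}). -/
/-! If `B'` dominates `R`, then `p` is the only candidate nobody approves while `|R| = k` candidates
are approved, so α-efficiency keeps `p` out of every winning committee. If some `r ∈ R` is not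
dominated, take any winning committee: either it contains `p`, or it is `R`, and then the
transposition of `p` and `r`, which fixes the candidate set and every vote, turns it by neutrality
into a winning committee containing `p`. -/

open Finset

attribute [local instance] Classical.propDecidable

universe u

variable {α : Type u}

section Reduction

def IsCommitteeRule (φ : Finset α → Multiset (Finset α) → ℕ → Finset (Finset α)) : Prop :=
  ∀ (C : Finset α) (V : Multiset (Finset α)) (k : ℕ), k ≤ C.card →
    (φ C V k).Nonempty ∧ ∀ w ∈ φ C V k, w ⊆ C ∧ w.card = k

variable [DecidableEq α]

/-- The set `C₀` of α-efficiency. -/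
def unapproved (C : Finset α) (V : Multiset (Finset α)) : Finset α :=
  C.filter fun c => ∀ v ∈ V, c ∉ v

def IsAlphaEfficient (φ : Finset α → Multiset (Finset α) → ℕ → Finset (Finset α)) : Prop :=
  ∀ (C : Finset α) (V : Multiset (Finset α)) (k : ℕ), (unapproved C V).Nonempty →
    k ≤ (C \ unapproved C V).card → ∀ w ∈ φ C V k, ∀ c ∈ unapproved C V, c ∉ w

def IsNeutral (φ : Finset α → Multiset (Finset α) → ℕ → Finset (Finset α)) : Prop :=
  ∀ (C : Finset α) (V : Multiset (Finset α)) (k : ℕ) (f : α ≃ α), k ≤ C.card → C.image f = C →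
    ∀ w : Finset α, w ∈ φ C V k ↔ w.image f ∈ φ C (V.map (Finset.image f)) k

theorem Finset.image_swap_eq_self {s : Finset α} {a b : α} (h : a ∈ s ↔ b ∈ s) :
    s.image (Equiv.swap a b) = s := by
  ext x
  simp only [mem_image]
  grind

variable {φ : Finset α → Multiset (Finset α) → ℕ → Finset (Finset α)}
  {R : Finset α} {p : α} {V : Multiset (Finset α)}

theorem IsAlphaEfficient.notMem_of_covered (heff : IsAlphaEfficient φ) (hp : p ∉ R)
    (hVR : ∀ v ∈ V, v ⊆ R) (hcover : ∀ r ∈ R, ∃ v ∈ V, r ∈ v) :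
    ∀ w ∈ φ (insert p R) V R.card, p ∉ w := by
  have hp₀ : p ∈ unapproved (insert p R) V :=
    mem_filter.2 ⟨mem_insert_self p R, fun v hv hpv => hp (hVR v hv hpv)⟩
  have hR : R ⊆ insert p R \ unapproved (insert p R) V := fun r hr => by
    obtain ⟨v, hv, hrv⟩ := hcover r hr
    exact mem_sdiff.2 ⟨mem_insert_of_mem hr, fun h => (mem_filter.1 h).2 v hv hrv⟩
  exact fun w hw => heff _ V _ ⟨p, hp₀⟩ (card_le_card hR) w hw p hp₀

theorem IsNeutral.exists_mem_of_not_covered (hneutral : IsNeutral φ) (hrule : IsCommitteeRule φ)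
    (hp : p ∉ R) (hVR : ∀ v ∈ V, v ⊆ R) {r : α} (hr : r ∈ R) (hunc : ∀ v ∈ V, r ∉ v) :
    ∃ w ∈ φ (insert p R) V R.card, p ∈ w := by
  have hk : R.card ≤ (insert p R).card := card_le_card (subset_insert p R)
  obtain ⟨w, hw⟩ := (hrule _ V _ hk).1
  by_cases hpw : p ∈ w
  · exact ⟨w, hw, hpw⟩
  obtain ⟨hwC, hwcard⟩ := (hrule _ V _ hk).2 w hw
  obtain rfl : w = R :=
    eq_of_subset_of_card_le ((subset_insert_iff_of_notMem hpw).1 hwC) hwcard.ge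
  have hC : (insert p w).image (Equiv.swap p r) = insert p w :=
    image_swap_eq_self (by simp [hr])
  have hV : V.map (image (Equiv.swap p r)) = V :=
    (Multiset.map_congr rfl fun v hv =>
      image_swap_eq_self (iff_of_false (fun h => hp (hVR v hv h)) (hunc v hv))).trans
      (Multiset.map_id V)
  refine ⟨w.image (Equiv.swap p r), ?_, mem_image.2 ⟨r, hr, Equiv.swap_apply_right p r⟩⟩
  simpa only [hV] using (hneutral _ V _ (Equiv.swap p r) hk hC w).1 hw

end Reduction

/-- Red vertices are candidates (members of `R`); blue vertices form the finset `B` of a type `δ`,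
the neighborhood of a blue vertex `b` being `nb b ⊆ R`. -/
theorem dcav_alpha_efficient_neutral_general {γ : Type u} {δ : Type*} [DecidableEq γ]
    (φ : Finset γ → Multiset (Finset γ) → ℕ → Finset (Finset γ))
    (hrule : ∀ (C : Finset γ) (V : Multiset (Finset γ)) (k : ℕ), k ≤ C.card →
      (φ C V k).Nonempty ∧ ∀ w ∈ φ C V k, w ⊆ C ∧ w.card = k)
    (heff : ∀ (C : Finset γ) (V : Multiset (Finset γ)) (k : ℕ),
      (C.filter fun c => ∀ v ∈ V, c ∉ v).Nonempty →
      k ≤ (C \ C.filter fun c => ∀ v ∈ V, c ∉ v).card →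
      ∀ w ∈ φ C V k, ∀ c ∈ C.filter fun c => ∀ v ∈ V, c ∉ v, c ∉ w)
    (hneutral : ∀ (C : Finset γ) (V : Multiset (Finset γ)) (k : ℕ) (f : γ ≃ γ),
      k ≤ C.card → C.image f = C →
      ∀ w : Finset γ, w ∈ φ C V k ↔ w.image f ∈ φ C (V.map (Finset.image f)) k)
    (R : Finset γ) (p : γ) (hp : p ∉ R)
    (B : Finset δ) (nb : δ → Finset γ) (hnb : ∀ b ∈ B, nb b ⊆ R)
    (κ : ℕ) :
    (∃ B' ⊆ B, B'.card ≤ κ ∧ ∀ r ∈ R, ∃ b ∈ B', r ∈ nb b) ↔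
      (∃ B' ⊆ B, B'.card ≤ κ ∧
        ∀ w ∈ φ (insert p R) (B'.val.map nb) R.card, p ∉ w) := by
  have hvotes : ∀ B' ⊆ B, ∀ v ∈ B'.val.map nb, v ⊆ R := fun B' hB' =>
    Multiset.forall_mem_map_iff.2 fun b hb => hnb b (hB' hb)
  constructor
  · rintro ⟨B', hB', hcard, hdom⟩
    refine ⟨B', hB', hcard, IsAlphaEfficient.notMem_of_covered heff hp (hvotes B' hB') ?_⟩
    simpa only [Multiset.mem_map, mem_val, exists_exists_and_eq_and] using hdom
  · rintro ⟨B', hB', hcard, hwin⟩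
    refine ⟨B', hB', hcard, fun r hr => ?_⟩
    by_contra! hunc
    obtain ⟨w, hw, hpw⟩ := IsNeutral.exists_mem_of_not_covered hneutral hrule hp (hvotes B' hB') hr
      (by simpa only [Multiset.forall_mem_map_iff, mem_val] using hunc)
    exact hwin w hw hpw

/-- correctness of the reduction from Red-Blue Dominating Set to
destructive control by adding voters, for every ABMV rule that is α-efficient and
neutral.  Red vertices are candidates (members of `R`); blue vertices form the finset
`B` of a type `δ`, the neighborhood of a blue vertex `b` being `nb b ⊆ R`. -/
theorem dcav_alpha_efficient_neutral {γ : Type u} {δ : Type*} [DecidableEq γ]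
    (φ : Finset γ → Multiset (Finset γ) → ℕ → Finset (Finset γ))
    (hrule : ∀ (C : Finset γ) (V : Multiset (Finset γ)) (k : ℕ), k ≤ C.card →
      (φ C V k).Nonempty ∧ ∀ w ∈ φ C V k, w ⊆ C ∧ w.card = k)
    (heff : ∀ (C : Finset γ) (V : Multiset (Finset γ)) (k : ℕ),
      (C.filter fun c => ∀ v ∈ V, c ∉ v).Nonempty →
      k ≤ (C \ C.filter fun c => ∀ v ∈ V, c ∉ v).card →
      ∀ w ∈ φ C V k, ∀ c ∈ C.filter fun c => ∀ v ∈ V, c ∉ v, c ∉ w)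
    (hneutral : ∀ (C : Finset γ) (V : Multiset (Finset γ)) (k : ℕ) (f : γ ≃ γ),
      k ≤ C.card → C.image f = C →
      ∀ w : Finset γ, w ∈ φ C V k ↔ w.image f ∈ φ C (V.map (Finset.image f)) k)
    (R : Finset γ) (hR : R.Nonempty) (p : γ) (hp : p ∉ R)
    (B : Finset δ) (nb : δ → Finset γ) (hnb : ∀ b ∈ B, nb b ⊆ R)
    (κ : ℕ) (hκ : κ ≤ B.card) :
    (∃ B' ⊆ B, B'.card ≤ κ ∧ ∀ r ∈ R, ∃ b ∈ B', r ∈ nb b) ↔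
      (∃ B' ⊆ B, B'.card ≤ κ ∧
        ∀ w ∈ φ (insert p R) (B'.val.map nb) R.card, p ∉ w) :=
  dcav_alpha_efficient_neutral_general φ hrule heff hneutral R p hp B nb hnb κ
end
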